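/- arXiv:2506.22983 — 5 statements merged into one kernel-verified Lean document; each statement's English description precedes it below -/
import Mathlib

section
/- Let q be a real number with q > 1 and let N be a nonnegative integer. For integers 0 ≤ i < m define C(m,i) = −[m choose i]_q · ∏_{k=i+1}^{m} (q^k + 1). Suppose X : ℕ → ℝ satisfies, for every m ≥ 0, the recursion X(m) = q^{(2m+1)N} + Σ_{i=0}^{m−1} C(m,i)·X(i). Then for every m ≥ 0 one has the closed form X(m) = Σ_{i=0}^{m} (−1)^{m−i} · q^{(m−i)(m−i−1)/2} · [m choose i]_q · (∏_{k=i+1}^{m} (q^k + 1)) · q^{(2i+1)N}. -/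
/-!
With `w m i = [m choose i]_q ∏_{k=i+1}^m (q^k + 1)` and `a m = q^((2m+1)N)`, the recursion says
`∑_{i ≤ m} w m i X i = a m`, a unitriangular system, so it suffices to check that the closed form
solves it. The weights compose like binomial coefficients,
`w m i * w i j = w m j * [m-j choose i-j]_q`, so after exchanging the two sums the check reduces to
`∑_{s ≤ r} (-1)^s q^(s(s-1)/2) [r choose s]_q = 0` for `r ≥ 1`: the q-binomial theorem
`∏_{i<r} (1 + q^i x) = ∑_s q^(s(s-1)/2) [r choose s]_q x^s` at `x = -1`.
-/

/-- The Gaussian binomial coefficient `[n choose k]_q` for a real base `q`. -/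
noncomputable def gbinom (q : ℝ) (n k : ℕ) : ℝ :=
  ∏ j ∈ Finset.Icc 1 k, (q ^ (n - k + j) - 1) / (q ^ j - 1)

open Finset

/-- `(q - 1)^n [n]_q!`; the powers of `q - 1` cancel in `gbinom`. -/
noncomputable def gfact (q : ℝ) (n : ℕ) : ℝ := ∏ j ∈ Icc 1 n, (q ^ j - 1)

/-- `gbinom q n k = 1` rather than `0` for `k > n` (truncated subtraction), which breaks the
q-Pascal rule at the boundary. -/
noncomputable def gbinom₀ (q : ℝ) (n k : ℕ) : ℝ := if k ≤ n then gbinom q n k else 0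

noncomputable def gweight (q : ℝ) (f : ℕ → ℝ) (m i : ℕ) : ℝ :=
  gbinom q m i * ∏ k ∈ Icc (i + 1) m, f k

noncomputable def gbinomInvTransform (q : ℝ) (f a : ℕ → ℝ) (m : ℕ) : ℝ :=
  ∑ i ∈ range (m + 1), (-1 : ℝ) ^ (m - i) * q ^ ((m - i) * (m - i - 1) / 2) * gweight q f m i * a i

lemma Finset.prod_Icc_succ_mul_prod_Icc_succ {M : Type*} [CommMonoid M] (f : ℕ → M) {j i m : ℕ}
    (hji : j ≤ i) (him : i ≤ m) :
    (∏ k ∈ Icc (i + 1) m, f k) * ∏ k ∈ Icc (j + 1) i, f k = ∏ k ∈ Icc (j + 1) m, f k := by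
  simp only [Icc_add_one_left_eq_Ioc]
  rw [mul_comm, prod_Ioc_consecutive f hji him]

section

variable {q : ℝ}

lemma gfact_succ (n : ℕ) : gfact q (n + 1) = gfact q n * (q ^ (n + 1) - 1) :=
  prod_Icc_succ_top (by omega) _

lemma gfact_ne_zero (hq : 1 < q) (n : ℕ) : gfact q n ≠ 0 :=
  prod_ne_zero_iff.2 fun _ hj =>
    sub_ne_zero.2 (one_lt_pow₀ hq (Nat.one_le_iff_ne_zero.1 (mem_Icc.1 hj).1)).ne'

lemma gfact_mul_prod_Icc (d : ℕ) :
    ∀ k : ℕ, gfact q d * ∏ j ∈ Icc 1 k, (q ^ (d + j) - 1) = gfact q (d + k)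
  | 0 => by simp
  | k + 1 => by
    rw [prod_Icc_succ_top (by omega), ← add_assoc, gfact_succ, ← gfact_mul_prod_Icc d k, mul_assoc]

lemma gbinom_eq_gfact_div (hq : 1 < q) {n k : ℕ} (h : k ≤ n) :
    gbinom q n k = gfact q n / (gfact q k * gfact q (n - k)) := by
  have hn : gfact q (n - k) * ∏ j ∈ Icc 1 k, (q ^ (n - k + j) - 1) = gfact q n := by
    rw [gfact_mul_prod_Icc, Nat.sub_add_cancel h]
  rw [gbinom, prod_div_distrib, ← hn]
  change _ / gfact q k = _
  field_simp [gfact_ne_zero hq]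

lemma gbinom_self (hq : 1 < q) (n : ℕ) : gbinom q n n = 1 := by
  rw [gbinom_eq_gfact_div hq le_rfl, Nat.sub_self, show gfact q 0 = 1 by simp [gfact], mul_one,
    div_self (gfact_ne_zero hq n)]

lemma gbinom_succ_succ (hq : 1 < q) {n k : ℕ} (h : k < n) :
    gbinom q (n + 1) (k + 1) = q ^ (k + 1) * gbinom q n (k + 1) + gbinom q n k := by
  obtain ⟨b, rfl⟩ : ∃ b, n = k + 1 + b := ⟨n - (k + 1), by omega⟩
  rw [gbinom_eq_gfact_div hq (by omega), gbinom_eq_gfact_div hq (by omega),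
    gbinom_eq_gfact_div hq (by omega), show k + 1 + b + 1 - (k + 1) = b + 1 by omega,
    show k + 1 + b - (k + 1) = b by omega, show k + 1 + b - k = b + 1 by omega,
    gfact_succ (k + 1 + b), gfact_succ k, gfact_succ b]
  have hk : q ^ (k + 1) - 1 ≠ 0 := sub_ne_zero.2 (one_lt_pow₀ hq (by omega)).ne'
  have hb : q ^ (b + 1) - 1 ≠ 0 := sub_ne_zero.2 (one_lt_pow₀ hq (by omega)).ne'
  field_simp [gfact_ne_zero hq, hk, hb]
  ring

lemma gbinom₀_succ_succ (hq : 1 < q) (n k : ℕ) :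
    gbinom₀ q (n + 1) (k + 1) = q ^ (k + 1) * gbinom₀ q n (k + 1) + gbinom₀ q n k := by
  rcases lt_trichotomy k n with h | rfl | h
  · simp only [gbinom₀, if_pos (by omega : k + 1 ≤ n + 1), if_pos (by omega : k + 1 ≤ n),
      if_pos h.le, gbinom_succ_succ hq h]
  · simp [gbinom₀, gbinom_self hq]
  · simp [gbinom₀, show ¬k ≤ n by omega, show ¬k + 1 ≤ n by omega]

lemma sum_range_neg_one_pow_mul_gbinom (hq : 1 < q) {r : ℕ} (hr : r ≠ 0) :
    ∑ s ∈ range (r + 1), (-1 : ℝ) ^ s * q ^ (s * (s - 1) / 2) * gbinom q r s = 0 := by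
  obtain ⟨n, rfl⟩ := Nat.exists_eq_succ_of_ne_zero hr
  let u (s : ℕ) : ℝ := (-1) ^ s * q ^ (s * (s - 1) / 2 + s) * gbinom₀ q n s
  -- q-Pascal splits each term into two that cancel telescopically.
  have hterm (s : ℕ) : (-1 : ℝ) ^ (s + 1) * q ^ ((s + 1) * s / 2) * gbinom₀ q (n + 1) (s + 1) =
      u (s + 1) - u s := by
    have htri : (s + 1) * s / 2 = s * (s - 1) / 2 + s := Nat.triangle_succ s
    simp only [u, gbinom₀_succ_succ hq, Nat.add_sub_cancel, htri]
    ring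
  calc ∑ s ∈ range (n + 1 + 1), (-1 : ℝ) ^ s * q ^ (s * (s - 1) / 2) * gbinom q (n + 1) s
      = ∑ s ∈ range (n + 1 + 1), (-1 : ℝ) ^ s * q ^ (s * (s - 1) / 2) * gbinom₀ q (n + 1) s :=
        sum_congr rfl fun s hs => by rw [gbinom₀, if_pos (Nat.lt_succ_iff.1 (mem_range.1 hs))]
    _ = u (n + 1) - u 0 + 1 := by
        simp only [sum_range_succ' _ (n + 1), Nat.add_sub_cancel, hterm, sum_range_sub]
        simp [gbinom₀, gbinom]
    _ = 0 := by simp [u, gbinom₀, gbinom]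

lemma gbinom_mul_gbinom (hq : 1 < q) {j i m : ℕ} (hji : j ≤ i) (him : i ≤ m) :
    gbinom q m i * gbinom q i j = gbinom q m j * gbinom q (m - j) (i - j) := by
  rw [gbinom_eq_gfact_div hq him, gbinom_eq_gfact_div hq hji,
    gbinom_eq_gfact_div hq (hji.trans him), gbinom_eq_gfact_div hq (Nat.sub_le_sub_right him j),
    show m - j - (i - j) = m - i by omega]
  field_simp [gfact_ne_zero hq]

lemma gweight_mul_gweight (hq : 1 < q) (f : ℕ → ℝ) {j i m : ℕ} (hji : j ≤ i) (him : i ≤ m) :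
    gweight q f m i * gweight q f i j = gweight q f m j * gbinom q (m - j) (i - j) := by
  rw [gweight, gweight, gweight, ← prod_Icc_succ_mul_prod_Icc_succ f hji him]
  linear_combination ((∏ k ∈ Icc (i + 1) m, f k) * ∏ k ∈ Icc (j + 1) i, f k) *
    gbinom_mul_gbinom hq hji him

lemma sum_Ico_neg_gweight_mul_gweight (hq : 1 < q) (f : ℕ → ℝ) {j m : ℕ} (hjm : j < m) :
    ∑ i ∈ Ico j m, -gweight q f m i *
        ((-1 : ℝ) ^ (i - j) * q ^ ((i - j) * (i - j - 1) / 2) * gweight q f i j) =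
      (-1 : ℝ) ^ (m - j) * q ^ ((m - j) * (m - j - 1) / 2) * gweight q f m j := by
  have hsplit : ∀ i ∈ Ico j m,
      -gweight q f m i * ((-1 : ℝ) ^ (i - j) * q ^ ((i - j) * (i - j - 1) / 2) * gweight q f i j) =
        -gweight q f m j *
          ((-1 : ℝ) ^ (i - j) * q ^ ((i - j) * (i - j - 1) / 2) * gbinom q (m - j) (i - j)) := by
    intro i hi
    obtain ⟨hji, him⟩ := mem_Ico.1 hi
    linear_combination (-(-1 : ℝ) ^ (i - j) * q ^ ((i - j) * (i - j - 1) / 2)) *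
      gweight_mul_gweight hq f hji him.le
  have hsum := sum_range_neg_one_pow_mul_gbinom hq (Nat.sub_ne_zero_of_lt hjm)
  rw [sum_range_succ, gbinom_self hq] at hsum
  rw [sum_congr rfl hsplit, ← mul_sum, sum_Ico_eq_sum_range]
  simp only [Nat.add_sub_cancel_left]
  linear_combination -gweight q f m j * hsum

lemma gbinomInvTransform_eq (hq : 1 < q) (f a : ℕ → ℝ) (m : ℕ) :
    gbinomInvTransform q f a m =
      a m + ∑ i ∈ range m, -gweight q f m i * gbinomInvTransform q f a i := by
  have hswap : ∑ i ∈ range m, -gweight q f m i * gbinomInvTransform q f a i =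
      ∑ j ∈ range m, ∑ i ∈ Ico j m, -gweight q f m i *
        ((-1 : ℝ) ^ (i - j) * q ^ ((i - j) * (i - j - 1) / 2) * gweight q f i j) * a j := by
    simp only [gbinomInvTransform, mul_sum, range_eq_Ico, mul_assoc]
    exact (sum_Ico_Ico_comm 0 m _).symm
  rw [hswap, gbinomInvTransform, sum_range_succ, add_comm]
  congr 1
  · simp [gweight, gbinom_self hq]
  · exact sum_congr rfl fun j hj => by
      rw [← sum_mul, sum_Ico_neg_gweight_mul_gweight hq f (mem_range.1 hj)]

end

theorem stmt0 (q : ℝ) (hq : 1 < q) (N : ℕ) (X : ℕ → ℝ)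
    (hX : ∀ m : ℕ, X m = q ^ ((2 * m + 1) * N) +
      ∑ i ∈ Finset.range m,
        (-(gbinom q m i * ∏ k ∈ Finset.Icc (i + 1) m, (q ^ k + 1))) * X i) :
    ∀ m : ℕ, X m = ∑ i ∈ Finset.range (m + 1),
      (-1 : ℝ) ^ (m - i) * q ^ ((m - i) * (m - i - 1) / 2) * gbinom q m i *
        (∏ k ∈ Finset.Icc (i + 1) m, (q ^ k + 1)) * q ^ ((2 * i + 1) * N) := by
  intro m
  induction m using Nat.strong_induction_on with
  | _ m ih =>
    rw [hX m, sum_congr rfl fun i hi => by rw [ih i (mem_range.1 hi)]]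
    have h := gbinomInvTransform_eq hq (fun k => q ^ k + 1) (fun i => q ^ ((2 * i + 1) * N)) m
    simp only [gbinomInvTransform, gweight, ← mul_assoc] at h
    exact h.symm
end

section
/- Let q be a real number with q > 1 and let n be a positive integer. For integers 0 ≤ i < N define C(N,i) = −[N choose i]_q · ∏_{j=i+1}^{N} (q^j + 1). Suppose X : ℕ → ℝ satisfies, for every N ≥ 0, the recursion X(N) = q^{nN} + Σ_{i=0}^{N−1} C(N,i)·X(i). Then for every N ≥ 0 one has X(N) = Σ_{i=0}^{N} (−1)^{N−i} · q^{(N−i)(N−i−1)/2} · [N choose i]_q · (∏_{j=i+1}^{N} (q^j + 1)) · q^{i·n}. -/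
namespace Stmt2Aux

noncomputable def qfac (q : ℝ) (m : ℕ) : ℝ := ∏ j ∈ Finset.Icc 1 m, (q ^ j - 1)

lemma qfac_zero (q : ℝ) : qfac q 0 = 1 := by simp [qfac]

lemma qfac_succ (q : ℝ) (m : ℕ) : qfac q (m + 1) = qfac q m * (q ^ (m + 1) - 1) := by
  rw [qfac, qfac, ← Finset.prod_Icc_succ_top (by omega)]

lemma qfac_pos {q : ℝ} (hq : 1 < q) (m : ℕ) : 0 < qfac q m := by
  refine Finset.prod_pos fun j hj => ?_
  have hj1 : 1 ≤ j := (Finset.mem_Icc.mp hj).1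
  have : (1:ℝ) < q ^ j := one_lt_pow₀ hq (by omega)
  linarith

lemma qfac_ne_zero {q : ℝ} (hq : 1 < q) (m : ℕ) : qfac q m ≠ 0 := (qfac_pos hq m).ne'

lemma qfac_add (q : ℝ) (a b : ℕ) :
    qfac q (a + b) = qfac q b * ∏ j ∈ Finset.Icc 1 a, (q ^ (b + j) - 1) := by
  induction a with
  | zero => simp
  | succ a ih =>
      rw [show a + 1 + b = (a + b) + 1 by omega, qfac_succ, ih,
        Finset.prod_Icc_succ_top (by omega : 1 ≤ a + 1)]
      rw [show b + (a + 1) = a + b + 1 by omega]; ring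

lemma gbinom_eq {q : ℝ} (hq : 1 < q) (a b : ℕ) :
    gbinom q (a + b) a = qfac q (a + b) / (qfac q a * qfac q b) := by
  have h : ∀ j, a + b - a + j = b + j := fun j => by omega
  rw [gbinom]
  rw [Finset.prod_congr rfl (fun j _ => by rw [h j]), Finset.prod_div_distrib, qfac_add q a b,
    ← qfac, mul_comm (qfac q a) (qfac q b), mul_div_mul_left _ _ (qfac_ne_zero hq b)]
lemma gbinom_zero (q : ℝ) (n : ℕ) : gbinom q n 0 = 1 := by simp [gbinom]

lemma gbinom_self {q : ℝ} (hq : 1 < q) (n : ℕ) : gbinom q n n = 1 := by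
  rw [gbinom]
  rw [Finset.prod_congr rfl (fun j _ => by rw [show n - n + j = j by omega])]
  refine Finset.prod_eq_one fun j hj => ?_
  have hj1 : 1 ≤ j := (Finset.mem_Icc.mp hj).1
  have h1 : (1:ℝ) < q ^ j := one_lt_pow₀ hq (by omega)
  rw [div_self (by linarith)]

lemma pascal {q : ℝ} (hq : 1 < q) (a b : ℕ) :
    gbinom q (a + b + 2) (a + 1)
      = gbinom q (a + b + 1) (a + 1) + q ^ (b + 1) * gbinom q (a + b + 1) a := by
  have h1 := gbinom_eq hq (a + 1) (b + 1)
  have h2 := gbinom_eq hq (a + 1) b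
  have h3 := gbinom_eq hq a (b + 1)
  rw [show a + 1 + (b + 1) = a + b + 2 by omega] at h1
  rw [show a + 1 + b = a + b + 1 by omega] at h2
  rw [show a + (b + 1) = a + b + 1 by omega] at h3
  rw [h1, h2, h3]
  rw [show a + b + 2 = (a + b + 1) + 1 by omega, qfac_succ, qfac_succ q a, qfac_succ q b]
  have ha := qfac_ne_zero hq a
  have hb := qfac_ne_zero hq b
  have hab := qfac_ne_zero hq (a + b + 1)
  have h4 : q ^ (a + 1) - 1 ≠ 0 := by nlinarith [one_lt_pow₀ hq (by omega : a + 1 ≠ 0)]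
  have h5 : q ^ (b + 1) - 1 ≠ 0 := by nlinarith [one_lt_pow₀ hq (by omega : b + 1 ≠ 0)]
  field_simp
  ring

lemma idA {q : ℝ} (hq : 1 < q) (k m e : ℕ) :
    gbinom q (k + m + e) (k + m) * gbinom q (k + m) k
      = gbinom q (k + m + e) k * gbinom q (m + e) m := by
  have h1 := gbinom_eq hq (k + m) e
  have h2 := gbinom_eq hq k m
  have h3 := gbinom_eq hq k (m + e)
  have h4 := gbinom_eq hq m e
  rw [show k + (m + e) = k + m + e by omega] at h3
  rw [h1, h2, h3, h4]
  have hk := qfac_ne_zero hq k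
  have hm := qfac_ne_zero hq m
  have he := qfac_ne_zero hq e
  have hkm := qfac_ne_zero hq (k + m)
  have hme := qfac_ne_zero hq (m + e)
  field_simp

/-- triangular number exponent -/
def c (m : ℕ) : ℕ := m * (m - 1) / 2

lemma c_succ (m : ℕ) : c (m + 1) = c m + m := by
  unfold c
  rw [← Nat.choose_two_right, ← Nat.choose_two_right, Nat.choose_succ_succ, Nat.choose_one_right, Nat.add_comm]

noncomputable def T (q : ℝ) (M : ℕ) : ℝ :=
  ∑ m ∈ Finset.range (M + 1), (-1 : ℝ) ^ m * q ^ c m * gbinom q M m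

lemma pascal' {q : ℝ} (hq : 1 < q) {M t : ℕ} (ht : t < M) :
    gbinom q (M + 1) (t + 1) = gbinom q M (t + 1) + q ^ (M - t) * gbinom q M t := by
  have h := pascal hq t (M - t - 1)
  rw [show t + (M - t - 1) + 2 = M + 1 by omega, show t + (M - t - 1) + 1 = M by omega,
    show M - t - 1 + 1 = M - t by omega] at h
  exact h

lemma T_succ {q : ℝ} (hq : 1 < q) (M : ℕ) : T q (M + 1) = (1 - q ^ M) * T q M := by
  have key : ∀ t ∈ Finset.range M,
      (-1 : ℝ) ^ (t + 1) * q ^ c (t + 1) * gbinom q (M + 1) (t + 1)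
        = (-1 : ℝ) ^ (t + 1) * q ^ c (t + 1) * gbinom q M (t + 1)
          + -q ^ M * ((-1 : ℝ) ^ t * q ^ c t * gbinom q M t) := by
    intro t ht
    have ht' : t < M := Finset.mem_range.mp ht
    have hqq : q ^ c (t + 1) * q ^ (M - t) = q ^ c t * q ^ M := by
      rw [← pow_add, ← pow_add, c_succ]
      congr 1
      omega
    rw [pascal' hq (Finset.mem_range.mp ht)]
    linear_combination ((-1 : ℝ) ^ (t + 1) * gbinom q M t) * hqq
  have hA : ∑ m ∈ Finset.range (M + 1), (-1 : ℝ) ^ m * q ^ c m * gbinom q M m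
      = (∑ t ∈ Finset.range M, (-1 : ℝ) ^ (t + 1) * q ^ c (t + 1) * gbinom q M (t + 1))
        + (-1 : ℝ) ^ 0 * q ^ c 0 * gbinom q M 0 := Finset.sum_range_succ' _ M
  have hB : ∑ m ∈ Finset.range (M + 1), (-1 : ℝ) ^ m * q ^ c m * gbinom q M m
      = (∑ t ∈ Finset.range M, (-1 : ℝ) ^ t * q ^ c t * gbinom q M t)
        + (-1 : ℝ) ^ M * q ^ c M * gbinom q M M := Finset.sum_range_succ _ M
  unfold T
  rw [Finset.sum_range_succ, Finset.sum_range_succ', Finset.sum_congr rfl key,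
    Finset.sum_add_distrib, ← Finset.mul_sum]
  simp only [gbinom_zero, gbinom_self hq, c_succ, pow_zero, pow_add, mul_one, one_mul,
    show c 0 = 0 from rfl] at hA hB ⊢
  linear_combination (-1 : ℝ) * hA + q ^ M * hB

lemma T_eq_zero {q : ℝ} (hq : 1 < q) (M : ℕ) (hM : 1 ≤ M) : T q M = 0 := by
  induction M with
  | zero => omega
  | succ M ih =>
      rw [T_succ hq]
      rcases Nat.eq_zero_or_pos M with h | h
      · subst h; simp [T, gbinom_zero, c]
      · rw [ih h, mul_zero]

lemma sum_triangle (f : ℕ → ℕ → ℝ) (N : ℕ) :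
    ∑ i ∈ Finset.range N, ∑ k ∈ Finset.range (i + 1), f i k
      = ∑ k ∈ Finset.range N, ∑ m ∈ Finset.range (N - k), f (k + m) k := by
  induction N with
  | zero => simp
  | succ N ih =>
      rw [Finset.sum_range_succ, ih, Finset.sum_range_succ]
      have h1 : ∀ k ∈ Finset.range N, ∑ m ∈ Finset.range (N + 1 - k), f (k + m) k
          = ∑ m ∈ Finset.range (N - k), f (k + m) k + f N k := by
        intro k hk
        have hk' : k < N := Finset.mem_range.mp hk
        rw [show N + 1 - k = (N - k) + 1 by omega, Finset.sum_range_succ,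
          show k + (N - k) = N by omega]
      conv_rhs => rw [Finset.sum_range_succ]
      rw [show N + 1 - N = 1 by omega, Finset.sum_range_one,
        Finset.sum_congr rfl h1, Finset.sum_add_distrib]
      simp only [Nat.add_zero]
      ring

lemma sum_part {q : ℝ} (hq : 1 < q) {D : ℕ} (hD : 1 ≤ D) :
    ∑ m ∈ Finset.range D, (-1 : ℝ) ^ m * q ^ c m * gbinom q D m
      = -((-1 : ℝ) ^ D * q ^ c D) := by
  have h := T_eq_zero hq D hD
  rw [T, Finset.sum_range_succ, gbinom_self hq] at h
  linarith

lemma prod_split (q : ℝ) {k i N : ℕ} (hki : k ≤ i) (hiN : i ≤ N) :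
    (∏ j ∈ Finset.Icc (k + 1) i, (q ^ j + 1)) * ∏ j ∈ Finset.Icc (i + 1) N, (q ^ j + 1)
      = ∏ j ∈ Finset.Icc (k + 1) N, (q ^ j + 1) := by
  have := Finset.prod_Ioc_consecutive (fun j => q ^ j + 1) hki hiN
  simpa [← Finset.Icc_add_one_left_eq_Ioc] using this

end Stmt2Aux

theorem stmt2 (q : ℝ) (hq : 1 < q) (n : ℕ) (hn : 0 < n) (X : ℕ → ℝ)
    (hX : ∀ N : ℕ, X N = q ^ (n * N) +
      ∑ i ∈ Finset.range N,
        (-(gbinom q N i * ∏ j ∈ Finset.Icc (i + 1) N, (q ^ j + 1))) * X i) :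
    ∀ N : ℕ, X N = ∑ i ∈ Finset.range (N + 1),
      (-1 : ℝ) ^ (N - i) * q ^ ((N - i) * (N - i - 1) / 2) * gbinom q N i *
        (∏ j ∈ Finset.Icc (i + 1) N, (q ^ j + 1)) * q ^ (i * n) := by
  intro N
  induction N using Nat.strong_induction_on with
  | _ N ih =>
  rw [hX N]
  have step1 : ∀ i ∈ Finset.range N,
      (-(gbinom q N i * ∏ j ∈ Finset.Icc (i + 1) N, (q ^ j + 1))) * X i
        = ∑ k ∈ Finset.range (i + 1),
            (-(gbinom q N i * ∏ j ∈ Finset.Icc (i + 1) N, (q ^ j + 1))) *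
              ((-1 : ℝ) ^ (i - k) * q ^ ((i - k) * (i - k - 1) / 2) * gbinom q i k *
                (∏ j ∈ Finset.Icc (k + 1) i, (q ^ j + 1)) * q ^ (k * n)) := by
    intro i hi
    rw [ih i (Finset.mem_range.mp hi), Finset.mul_sum]
  rw [Finset.sum_congr rfl step1,
    Stmt2Aux.sum_triangle (fun i k =>
      (-(gbinom q N i * ∏ j ∈ Finset.Icc (i + 1) N, (q ^ j + 1))) *
        ((-1 : ℝ) ^ (i - k) * q ^ ((i - k) * (i - k - 1) / 2) * gbinom q i k *
          (∏ j ∈ Finset.Icc (k + 1) i, (q ^ j + 1)) * q ^ (k * n))) N]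
  beta_reduce
  have step2 : ∀ k ∈ Finset.range N,
      (∑ m ∈ Finset.range (N - k),
        (-(gbinom q N (k + m) * ∏ j ∈ Finset.Icc (k + m + 1) N, (q ^ j + 1))) *
          ((-1 : ℝ) ^ (k + m - k) * q ^ ((k + m - k) * (k + m - k - 1) / 2) *
            gbinom q (k + m) k *
            (∏ j ∈ Finset.Icc (k + 1) (k + m), (q ^ j + 1)) * q ^ (k * n)))
        = (-1 : ℝ) ^ (N - k) * q ^ ((N - k) * (N - k - 1) / 2) * gbinom q N k *
            (∏ j ∈ Finset.Icc (k + 1) N, (q ^ j + 1)) * q ^ (k * n) := by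
    intro k hk
    have hkN : k < N := Finset.mem_range.mp hk
    have hin : ∀ m ∈ Finset.range (N - k),
        (-(gbinom q N (k + m) * ∏ j ∈ Finset.Icc (k + m + 1) N, (q ^ j + 1))) *
          ((-1 : ℝ) ^ (k + m - k) * q ^ ((k + m - k) * (k + m - k - 1) / 2) *
            gbinom q (k + m) k *
            (∏ j ∈ Finset.Icc (k + 1) (k + m), (q ^ j + 1)) * q ^ (k * n))
          = (-(gbinom q N k * (∏ j ∈ Finset.Icc (k + 1) N, (q ^ j + 1)) * q ^ (k * n))) *
              ((-1 : ℝ) ^ m * q ^ Stmt2Aux.c m * gbinom q (N - k) m) := by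
      intro m hm
      have hm' : m < N - k := Finset.mem_range.mp hm
      have e1 := Stmt2Aux.idA hq k m (N - k - m)
      rw [show k + m + (N - k - m) = N by omega, show m + (N - k - m) = N - k by omega] at e1
      have e2 := Stmt2Aux.prod_split q (by omega : k ≤ k + m) (by omega : k + m ≤ N)
      simp only [Nat.add_sub_cancel_left, Stmt2Aux.c]
      linear_combination
        (-((-1 : ℝ) ^ m * q ^ (m * (m - 1) / 2) * q ^ (k * n)) *
            (∏ j ∈ Finset.Icc (k + 1) (k + m), (q ^ j + 1)) *
            (∏ j ∈ Finset.Icc (k + m + 1) N, (q ^ j + 1))) * e1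
          + (-((-1 : ℝ) ^ m * q ^ (m * (m - 1) / 2) * q ^ (k * n)) * gbinom q N k *
              gbinom q (N - k) m) * e2
    rw [Finset.sum_congr rfl hin, ← Finset.mul_sum,
      Stmt2Aux.sum_part hq (by omega : 1 ≤ N - k)]
    simp only [Stmt2Aux.c]
    ring
  rw [Finset.sum_congr rfl step2, Finset.sum_range_succ,
    Finset.Icc_eq_empty (by omega : ¬ N + 1 ≤ N), Finset.prod_empty]
  simp only [Nat.sub_self, pow_zero, Stmt2Aux.gbinom_self hq, one_mul, mul_one,
    Nat.zero_mul, Nat.zero_div]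
  rw [mul_comm n N]
  ring
end

section
/- Let q be a real number with q > 1 and let N, m be integers with 0 ≤ N ≤ m. Then Σ_{i=0}^{N} (−1)^{N−i} · q^{(N−i)(N−i−1)/2} · [N choose i]_q · (∏_{j=i+1}^{N} (q^j + 1)) · q^{i(2m+1)} = Σ_{ℓ=0}^{N} (−1)^{ℓ} · q^{(N−ℓ)² + ℓ(ℓ−1)} · [N choose ℓ]_{q²} · ∏_{i=0}^{N−ℓ−1} (q^{2(m−i)} − 1). -/
/-!
Put `Q = q²` and `x = Q^m`. By the `q`-binomial theorem in base `Q`,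
`q^((N-ℓ)²) ∏_{i<N-ℓ} (Q^(m-i) - 1)` is a signed sum of the terms `q^((N-ℓ-k)² + k) [N-ℓ, k]_Q x^k`.
Exchanging the sums over `ℓ` and `k` and using `[N, ℓ]_Q [N-ℓ, k]_Q = [N, k]_Q [N-k, ℓ]_Q`, the
coefficient of `x^k` becomes a multiple of `sumPred q M = ∑_ℓ q^(ℓ(ℓ-1) + (M-ℓ)²) [M, ℓ]_Q`,
`M = N - k`. The two Pascal rules give a joint recursion for `sumPred` and the companion `sumSucc`
(with `ℓ(ℓ+1)` in place of `ℓ(ℓ-1)`), whence `sumPred q M = q^(M(M-1)/2) ∏_{j=1}^M (q^j + 1)`.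
Finally the factorisation
`(Q;Q)_n = (q;q)_n (-q;q)_n` turns `[N, k]_Q ∏_{j ≤ N-k} (q^j + 1)` into
`[N, k]_q ∏_{j=k+1}^N (q^j + 1)`.
-/

open Finset

namespace QChoose

theorem add_one_choose_two (n : ℕ) : (n + 1).choose 2 = n + n.choose 2 := by
  rw [Nat.choose_succ_succ', Nat.choose_one_right]

theorem sq_eq_add_two_mul_choose_two (n : ℕ) : n ^ 2 = n + 2 * n.choose 2 := by
  induction n with
  | zero => rfl
  | succ n ih => rw [add_one_choose_two, add_sq, ih]; ring

theorem pow_choose_two_mul_prod_pow_sub_one {R : Type*} [CommRing R] (Q : R) {n m : ℕ}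
    (hnm : n ≤ m) :
    Q ^ n.choose 2 * ∏ i ∈ range n, (Q ^ (m - i) - 1) = ∏ i ∈ range n, (Q ^ m - Q ^ i) := by
  rw [Nat.choose_two_right, ← sum_range_id, ← prod_pow_eq_pow_sum, ← prod_mul_distrib]
  refine prod_congr rfl fun i hi => ?_
  rw [mul_sub, mul_one, pow_mul_pow_sub Q (by have := mem_range.1 hi; omega)]

variable {K : Type*} [Field K] {q : K}

def qFac (q : K) (n : ℕ) : K := ∏ j ∈ range n, (q ^ (j + 1) - 1)

def qFacPlus (q : K) (n : ℕ) : K := ∏ j ∈ range n, (q ^ (j + 1) + 1)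

-- Unlike `gbinom`, which is `1` for `n < k` through truncated subtraction, `qChoose` vanishes
-- there, so that Pascal's rule holds for all `k`.
def qChoose (q : K) (n k : ℕ) : K :=
  if k ≤ n then qFac q n / (qFac q k * qFac q (n - k)) else 0

@[simp]
theorem qFac_zero : qFac q 0 = 1 := prod_range_zero _

theorem qFac_succ (n : ℕ) : qFac q (n + 1) = qFac q n * (q ^ (n + 1) - 1) :=
  prod_range_succ _ _

@[simp]
theorem qFacPlus_zero : qFacPlus q 0 = 1 := prod_range_zero _

theorem qFacPlus_succ (n : ℕ) : qFacPlus q (n + 1) = qFacPlus q n * (q ^ (n + 1) + 1) :=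
  prod_range_succ _ _

theorem qFac_ne_zero (hq : ∀ n, q ^ (n + 1) ≠ 1) (n : ℕ) : qFac q n ≠ 0 :=
  prod_ne_zero_iff.2 fun j _ => sub_ne_zero.2 (hq j)

theorem qFacPlus_ne_zero (hq : ∀ n, q ^ (n + 1) ≠ 1) (n : ℕ) : qFacPlus q n ≠ 0 := by
  refine prod_ne_zero_iff.2 fun j _ h => hq (2 * j + 1) ?_
  rw [show 2 * j + 1 + 1 = 2 * (j + 1) by ring, pow_mul', eq_neg_of_add_eq_zero_left h]
  norm_num

theorem sq_pow_succ_ne_one (hq : ∀ n, q ^ (n + 1) ≠ 1) (n : ℕ) : (q ^ 2) ^ (n + 1) ≠ 1 := by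
  rw [← pow_mul, show 2 * (n + 1) = 2 * n + 1 + 1 by ring]
  exact hq _

theorem qFac_sq (n : ℕ) : qFac (q ^ 2) n = qFac q n * qFacPlus q n := by
  rw [qFac, qFac, qFacPlus, ← prod_mul_distrib]
  refine prod_congr rfl fun j _ => ?_
  ring

theorem qFacPlus_mul_prod_Icc {k n : ℕ} (hkn : k ≤ n) :
    qFacPlus q k * ∏ j ∈ Icc (k + 1) n, (q ^ j + 1) = qFacPlus q n := by
  rw [qFacPlus, qFacPlus, ← prod_range_mul_prod_Ico _ hkn, ← Ico_add_one_right_eq_Icc,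
    prod_Ico_add' (fun j => q ^ j + 1)]

theorem qChoose_of_lt {n k : ℕ} (h : n < k) : qChoose q n k = 0 := if_neg h.not_ge

theorem qChoose_zero_right (hq : ∀ n, q ^ (n + 1) ≠ 1) (n : ℕ) : qChoose q n 0 = 1 := by
  simp [qChoose, div_self (qFac_ne_zero hq n)]

theorem qChoose_self (hq : ∀ n, q ^ (n + 1) ≠ 1) (n : ℕ) : qChoose q n n = 1 := by
  simp [qChoose, div_self (qFac_ne_zero hq n)]

theorem qChoose_succ_succ (hq : ∀ n, q ^ (n + 1) ≠ 1) (n k : ℕ) :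
    qChoose q (n + 1) (k + 1) = qChoose q n k + q ^ (k + 1) * qChoose q n (k + 1) := by
  rcases lt_trichotomy k n with hkn | rfl | hnk
  · obtain ⟨a, rfl⟩ := Nat.exists_eq_add_of_lt hkn
    simp only [qChoose, show k + 1 ≤ k + a + 1 + 1 by omega, show k ≤ k + a + 1 by omega,
      show k + 1 ≤ k + a + 1 by omega, if_true, show k + a + 1 + 1 - (k + 1) = a + 1 by omega,
      show k + a + 1 - k = a + 1 by omega, show k + a + 1 - (k + 1) = a by omega, qFac_succ]
    have := qFac_ne_zero hq
    have := sub_ne_zero.2 (hq k)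
    have := sub_ne_zero.2 (hq a)
    field_simp
    ring
  · rw [qChoose_self hq, qChoose_self hq, qChoose_of_lt k.lt_succ_self, mul_zero, add_zero]
  · rw [qChoose_of_lt (by omega), qChoose_of_lt hnk, qChoose_of_lt (by omega)]
    ring

theorem qChoose_succ_succ' (hq : ∀ n, q ^ (n + 1) ≠ 1) (n k : ℕ) :
    qChoose q (n + 1) (k + 1) = q ^ (n - k) * qChoose q n k + qChoose q n (k + 1) := by
  rcases lt_trichotomy k n with hkn | rfl | hnk
  · obtain ⟨a, rfl⟩ := Nat.exists_eq_add_of_lt hkn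
    simp only [qChoose, show k + 1 ≤ k + a + 1 + 1 by omega, show k ≤ k + a + 1 by omega,
      show k + 1 ≤ k + a + 1 by omega, if_true, show k + a + 1 + 1 - (k + 1) = a + 1 by omega,
      show k + a + 1 - k = a + 1 by omega, show k + a + 1 - (k + 1) = a by omega, qFac_succ]
    have := qFac_ne_zero hq
    have := sub_ne_zero.2 (hq k)
    have := sub_ne_zero.2 (hq a)
    field_simp
    ring
  · rw [qChoose_self hq, qChoose_self hq, qChoose_of_lt k.lt_succ_self, Nat.sub_self]
    ring
  · rw [qChoose_of_lt (by omega), qChoose_of_lt hnk, qChoose_of_lt (by omega)]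
    ring

theorem qChoose_mul_qChoose_sub (hq : ∀ n, q ^ (n + 1) ≠ 1) {n k l : ℕ} (h : k + l ≤ n) :
    qChoose q n l * qChoose q (n - l) k = qChoose q n k * qChoose q (n - k) l := by
  simp only [qChoose, show l ≤ n by omega, show k ≤ n - l by omega, show k ≤ n by omega,
    show l ≤ n - k by omega, if_true, show n - l - k = n - k - l by omega]
  have := qFac_ne_zero hq (n - l)
  have := qFac_ne_zero hq (n - k)
  field_simp

theorem qChoose_sq_mul_qFacPlus (hq : ∀ n, q ^ (n + 1) ≠ 1) {n k : ℕ} (hkn : k ≤ n) :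
    qChoose (q ^ 2) n k * qFacPlus q (n - k) =
      qChoose q n k * ∏ j ∈ Icc (k + 1) n, (q ^ j + 1) := by
  rw [qChoose, qChoose, if_pos hkn, if_pos hkn, qFac_sq, qFac_sq, qFac_sq,
    ← qFacPlus_mul_prod_Icc (q := q) hkn]
  have := qFacPlus_ne_zero hq k
  have := qFacPlus_ne_zero hq (n - k)
  field_simp

theorem sum_mul_qChoose_succ (hq : ∀ n, q ^ (n + 1) ≠ 1) (f : ℕ → K) (n : ℕ) :
    ∑ k ∈ range (n + 2), f k * qChoose q (n + 1) k =
      ∑ k ∈ range (n + 1), f (k + 1) * qChoose q n k +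
        ∑ k ∈ range (n + 1), f k * q ^ k * qChoose q n k := by
  have hshift := sum_range_succ' (fun k => f k * q ^ k * qChoose q n k) (n + 1)
  rw [sum_range_succ, qChoose_of_lt n.lt_succ_self, qChoose_zero_right hq] at hshift
  rw [sum_range_succ', qChoose_zero_right hq]
  simp only [qChoose_succ_succ hq, mul_add, sum_add_distrib, mul_assoc] at hshift ⊢
  linear_combination -hshift

theorem sum_mul_qChoose_succ' (hq : ∀ n, q ^ (n + 1) ≠ 1) (f : ℕ → K) (n : ℕ) :
    ∑ k ∈ range (n + 2), f k * qChoose q (n + 1) k =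
      ∑ k ∈ range (n + 1), f (k + 1) * q ^ (n - k) * qChoose q n k +
        ∑ k ∈ range (n + 1), f k * qChoose q n k := by
  have hshift := sum_range_succ' (fun k => f k * qChoose q n k) (n + 1)
  rw [sum_range_succ, qChoose_of_lt n.lt_succ_self, qChoose_zero_right hq] at hshift
  rw [sum_range_succ', qChoose_zero_right hq]
  simp only [qChoose_succ_succ' hq, mul_add, sum_add_distrib, mul_assoc] at hshift ⊢
  linear_combination -hshift

theorem prod_range_sub_pow (hq : ∀ n, q ^ (n + 1) ≠ 1) (x : K) (n : ℕ) :
    ∏ i ∈ range n, (x - q ^ i) =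
      ∑ k ∈ range (n + 1), (-1) ^ (n - k) * q ^ (n - k).choose 2 * x ^ k * qChoose q n k := by
  induction n with
  | zero => simp [qChoose_self hq]
  | succ n ih =>
    rw [prod_range_succ, ih, sum_mul_qChoose_succ hq, mul_sub, sum_mul, sum_mul, sub_eq_add_neg,
      ← sum_neg_distrib]
    congr 1
    · refine sum_congr rfl fun k _ => ?_
      rw [Nat.add_sub_add_right, pow_succ]
      ring
    · refine sum_congr rfl fun k hk => ?_
      have hkn : k ≤ n := Nat.lt_succ_iff.1 (mem_range.1 hk)
      rw [Nat.sub_add_comm hkn, Nat.choose_succ_succ', Nat.choose_one_right, pow_succ, pow_add,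
        ← pow_sub_mul_pow q hkn]
      ring

def sumPred (q : K) (M : ℕ) : K :=
  ∑ l ∈ range (M + 1), q ^ (l * (l - 1) + (M - l) ^ 2) * qChoose (q ^ 2) M l

def sumSucc (q : K) (M : ℕ) : K :=
  ∑ l ∈ range (M + 1), q ^ (l * (l + 1) + (M - l) ^ 2) * qChoose (q ^ 2) M l

theorem sumPred_succ (hq : ∀ n, q ^ (n + 1) ≠ 1) (M : ℕ) :
    sumPred q (M + 1) = sumSucc q M + q ^ (2 * M + 1) * sumPred q M := by
  rw [sumPred, sum_mul_qChoose_succ (sq_pow_succ_ne_one hq), sumSucc, sumPred, mul_sum]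
  congr 1 <;> refine sum_congr rfl fun l hl => ?_
  · rw [Nat.add_sub_cancel, Nat.add_sub_add_right, mul_comm (l + 1)]
  · obtain ⟨a, rfl⟩ := Nat.exists_eq_add_of_le (Nat.lt_succ_iff.1 (mem_range.1 hl))
    rw [show l + a + 1 - l = a + 1 by omega, Nat.add_sub_cancel_left]
    ring

theorem sumSucc_succ (hq : ∀ n, q ^ (n + 1) ≠ 1) (M : ℕ) :
    sumSucc q (M + 1) = q ^ (2 * M + 2) * sumSucc q M + q ^ (2 * M + 1) * sumPred q M := by
  rw [sumSucc, sum_mul_qChoose_succ' (sq_pow_succ_ne_one hq), sumSucc, sumPred, mul_sum, mul_sum]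
  congr 1 <;> refine sum_congr rfl fun l hl => ?_ <;>
    obtain ⟨a, rfl⟩ := Nat.exists_eq_add_of_le (Nat.lt_succ_iff.1 (mem_range.1 hl))
  · rw [Nat.add_sub_add_right, Nat.add_sub_cancel_left]
    ring
  · rw [show l + a + 1 - l = a + 1 by omega, Nat.add_sub_cancel_left]
    cases l <;> simp only [Nat.add_sub_cancel, Nat.zero_sub] <;> ring

theorem sumPred_eq_and_sumSucc_eq (hq : ∀ n, q ^ (n + 1) ≠ 1) (M : ℕ) :
    sumPred q M = q ^ M.choose 2 * qFacPlus q M ∧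
      sumSucc q M = q ^ (M + 1).choose 2 * qFacPlus q M := by
  induction M with
  | zero => simp [sumPred, sumSucc, qChoose_self (sq_pow_succ_ne_one hq)]
  | succ M ih =>
    rw [sumPred_succ hq, sumSucc_succ hq, ih.1, ih.2, qFacPlus_succ, add_one_choose_two (M + 1),
      add_one_choose_two M]
    constructor <;> ring

theorem pow_sq_mul_prod_pow_sub_one (hq : ∀ n, q ^ (n + 1) ≠ 1) {n m : ℕ} (hnm : n ≤ m) :
    q ^ (n ^ 2) * ∏ i ∈ range n, (q ^ (2 * (m - i)) - 1) =
      ∑ k ∈ range (n + 1),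
        (-1) ^ (n - k) * q ^ ((n - k) ^ 2 + k * (2 * m + 1)) * qChoose (q ^ 2) n k := by
  simp only [pow_mul q 2]
  rw [sq_eq_add_two_mul_choose_two n, pow_add, pow_mul, mul_assoc,
    pow_choose_two_mul_prod_pow_sub_one _ hnm, prod_range_sub_pow (sq_pow_succ_ne_one hq), mul_sum]
  refine sum_congr rfl fun k hk => ?_
  obtain ⟨r, rfl⟩ := Nat.exists_eq_add_of_le (Nat.lt_succ_iff.1 (mem_range.1 hk))
  rw [Nat.add_sub_cancel_left, sq_eq_add_two_mul_choose_two r]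
  ring

theorem sum_qChoose_sq_mul_prod_pow_sub_one (hq : ∀ n, q ^ (n + 1) ≠ 1) {N m : ℕ}
    (hNm : N ≤ m) :
    ∑ ℓ ∈ range (N + 1), (-1) ^ ℓ * q ^ ((N - ℓ) ^ 2 + ℓ * (ℓ - 1)) * qChoose (q ^ 2) N ℓ *
        ∏ i ∈ range (N - ℓ), (q ^ (2 * (m - i)) - 1) =
      ∑ k ∈ range (N + 1), (-1) ^ (N - k) * q ^ (k * (2 * m + 1)) * qChoose (q ^ 2) N k *
        sumPred q (N - k) := by
  calc _ = ∑ ℓ ∈ range (N + 1), ∑ k ∈ range (N - ℓ + 1),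
          (-1) ^ ℓ * q ^ (ℓ * (ℓ - 1)) * qChoose (q ^ 2) N ℓ *
            ((-1) ^ (N - ℓ - k) * q ^ ((N - ℓ - k) ^ 2 + k * (2 * m + 1)) *
              qChoose (q ^ 2) (N - ℓ) k) := by
        refine sum_congr rfl fun ℓ _ => ?_
        rw [← mul_sum, ← pow_sq_mul_prod_pow_sub_one hq (by omega)]
        ring
    _ = ∑ k ∈ range (N + 1), ∑ ℓ ∈ range (N - k + 1),
          (-1) ^ ℓ * q ^ (ℓ * (ℓ - 1)) * qChoose (q ^ 2) N ℓ *
            ((-1) ^ (N - ℓ - k) * q ^ ((N - ℓ - k) ^ 2 + k * (2 * m + 1)) *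
              qChoose (q ^ 2) (N - ℓ) k) :=
        sum_comm' fun ℓ k => by simp only [mem_range]; omega
    _ = _ := by
        refine sum_congr rfl fun k hk => ?_
        rw [sumPred, mul_sum]
        refine sum_congr rfl fun ℓ hℓ => ?_
        have hℓk : ℓ ≤ N - k := Nat.lt_succ_iff.1 (mem_range.1 hℓ)
        have hsign : (-1 : K) ^ ℓ * (-1) ^ (N - k - ℓ) = (-1) ^ (N - k) := by
          rw [← pow_add, Nat.add_sub_cancel' hℓk]
        have hswap := qChoose_mul_qChoose_sub (sq_pow_succ_ne_one hq) (n := N) (k := k) (l := ℓ)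
          (by have := mem_range.1 hk; omega)
        rw [Nat.sub_right_comm N ℓ k]
        linear_combination q ^ (ℓ * (ℓ - 1) + (N - k - ℓ) ^ 2 + k * (2 * m + 1)) *
          ((-1) ^ ℓ * (-1) ^ (N - k - ℓ) * hswap +
            qChoose (q ^ 2) N k * qChoose (q ^ 2) (N - k) ℓ * hsign)

end QChoose

open QChoose in
theorem gbinom_eq_qChoose {q : ℝ} (hq : ∀ n, q ^ (n + 1) ≠ 1) {n k : ℕ} (hkn : k ≤ n) :
    gbinom q n k = qChoose q n k := by
  have hden : ∏ j ∈ Icc 1 k, (q ^ j - 1) = qFac q k := by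
    rw [qFac, ← Ico_add_one_right_eq_Icc, prod_Ico_eq_prod_range, Nat.add_sub_cancel]
    exact prod_congr rfl fun j _ => by rw [add_comm]
  have hnum : (∏ j ∈ Icc 1 k, (q ^ (n - k + j) - 1)) * qFac q (n - k) = qFac q n := by
    rw [qFac, qFac, mul_comm, ← prod_range_mul_prod_Ico _ (Nat.sub_le n k),
      ← Ico_add_one_right_eq_Icc, prod_Ico_eq_prod_range, prod_Ico_eq_prod_range,
      Nat.add_sub_cancel, Nat.sub_sub_self hkn]
    exact congrArg _ (prod_congr rfl fun j _ => by rw [add_comm 1 j, add_assoc])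
  rw [gbinom, prod_div_distrib, hden, qChoose, if_pos hkn, ← hnum]
  have := qFac_ne_zero hq (n - k)
  field_simp

open QChoose in
theorem stmt3 (q : ℝ) (hq : 1 < q) (N m : ℕ) (hNm : N ≤ m) :
    ∑ i ∈ Finset.range (N + 1),
      (-1 : ℝ) ^ (N - i) * q ^ ((N - i) * (N - i - 1) / 2) * gbinom q N i *
        (∏ j ∈ Finset.Icc (i + 1) N, (q ^ j + 1)) * q ^ (i * (2 * m + 1)) =
    ∑ ℓ ∈ Finset.range (N + 1),
      (-1 : ℝ) ^ ℓ * q ^ ((N - ℓ) ^ 2 + ℓ * (ℓ - 1)) * gbinom (q ^ 2) N ℓ *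
        ∏ i ∈ Finset.range (N - ℓ), (q ^ (2 * (m - i)) - 1) := by
  have hq' : ∀ n, q ^ (n + 1) ≠ 1 := fun n => (one_lt_pow₀ hq n.succ_ne_zero).ne'
  have hgbinom : ∀ Q : ℝ, (∀ n, Q ^ (n + 1) ≠ 1) →
      ∀ k ∈ range (N + 1), gbinom Q N k = qChoose Q N k :=
    fun Q hQ k hk => gbinom_eq_qChoose hQ (Nat.lt_succ_iff.1 (mem_range.1 hk))
  symm
  rw [sum_congr rfl fun ℓ hℓ => by rw [hgbinom _ (sq_pow_succ_ne_one hq') ℓ hℓ],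
    sum_qChoose_sq_mul_prod_pow_sub_one hq' hNm]
  refine sum_congr rfl fun k hk => ?_
  rw [(sumPred_eq_and_sumSucc_eq hq' _).1, hgbinom q hq' k hk, Nat.choose_two_right]
  linear_combination (-1) ^ (N - k) * q ^ (k * (2 * m + 1)) * q ^ ((N - k) * (N - k - 1) / 2) *
    qChoose_sq_mul_qFacPlus hq' (Nat.lt_succ_iff.1 (mem_range.1 hk))
end

section
/- Let q be a real number with q > 1 and let m, N be integers with 0 ≤ m ≤ N. Then Σ_{i=0}^{m} (−1)^{m−i} · q^{(m−i)(m−i−1)/2} · [m choose i]_q · (∏_{j=i}^{m−1} (q^j + 1)) · q^{2iN} = Σ_{ℓ=0}^{m} (−1)^{ℓ} · q^{ℓ(ℓ−1) + (m−ℓ)(m−ℓ−1)} · [m choose ℓ]_{q²} · ((q^{m−ℓ} + q^{ℓ})/(q^m + 1)) · ∏_{j=0}^{m−ℓ−1} (q^{2(N−j)} − 1). -/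
open Finset

namespace Nat

lemma choose_two_succ (n : ℕ) : (n + 1).choose 2 = n.choose 2 + n := by
  simp [Nat.choose_succ_succ', add_comm]

lemma choose_two_add (a b : ℕ) : (a + b).choose 2 = a.choose 2 + b.choose 2 + a * b := by
  induction b with
  | zero => simp
  | succ b ih => rw [← add_assoc, choose_two_succ, ih, choose_two_succ]; ring

lemma two_mul_choose_two (n : ℕ) : 2 * n.choose 2 = n * (n - 1) := by
  rw [Nat.choose_two_right, Nat.two_mul_div_two_of_even (Nat.even_mul_pred_self n)]

lemma two_mul_choose_two_add_self (n : ℕ) : 2 * n.choose 2 + n = n * n := by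
  rw [two_mul_choose_two]
  cases n <;> simp
  ring

end Nat

lemma sum_range_sum_antidiagonal_comm {M : Type*} [AddCommMonoid M] (f : ℕ → ℕ → ℕ → M)
    (n : ℕ) :
    ∑ i ∈ range (n + 1), ∑ p ∈ antidiagonal (n - i), f i p.1 p.2 =
      ∑ i ∈ range (n + 1), ∑ p ∈ antidiagonal (n - i), f p.1 i p.2 := by
  rw [sum_sigma', sum_sigma']
  refine sum_nbij' (fun x => ⟨x.2.1, (x.1, x.2.2)⟩) (fun x => ⟨x.2.1, (x.1, x.2.2)⟩)
      ?_ ?_ ?_ ?_ ?_ <;>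
    simp only [mem_sigma, mem_range, HasAntidiagonal.mem_antidiagonal, implies_true, and_imp,
      Sigma.forall, Prod.forall] <;>
    omega

section CommRing

variable {R : Type*} [CommRing R] (x : R)

def qBinom : ℕ → ℕ → R
  | _, 0 => 1
  | 0, _ + 1 => 0
  | n + 1, k + 1 => qBinom n k + x ^ (k + 1) * qBinom n (k + 1)

@[simp] lemma qBinom_zero_right (n : ℕ) : qBinom x n 0 = 1 := by
  cases n <;> rfl

lemma qBinom_succ_succ (n k : ℕ) :
    qBinom x (n + 1) (k + 1) = qBinom x n k + x ^ (k + 1) * qBinom x n (k + 1) := rfl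

lemma qBinom_eq_zero_of_lt : ∀ {n k : ℕ}, n < k → qBinom x n k = 0
  | 0, _ + 1, _ => rfl
  | n + 1, k + 1, h => by
    rw [qBinom_succ_succ, qBinom_eq_zero_of_lt (by omega), qBinom_eq_zero_of_lt (by omega),
      mul_zero, add_zero]

@[simp] lemma qBinom_self : ∀ n : ℕ, qBinom x n n = 1
  | 0 => rfl
  | n + 1 => by rw [qBinom_succ_succ, qBinom_self n, qBinom_eq_zero_of_lt x n.lt_succ_self]; ring

/-- `(x - 1) ^ n` times the `x`-factorial `[n]_x!`. -/
def qFactorial (n : ℕ) : R := ∏ j ∈ range n, (x ^ (j + 1) - 1)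

@[simp] lemma qFactorial_zero : qFactorial x 0 = 1 := prod_range_zero _

lemma qFactorial_succ (n : ℕ) : qFactorial x (n + 1) = qFactorial x n * (x ^ (n + 1) - 1) :=
  prod_range_succ _ _

lemma qBinom_mul_qFactorial_mul_qFactorial :
    ∀ {n k : ℕ}, k ≤ n → qBinom x n k * qFactorial x k * qFactorial x (n - k) = qFactorial x n
  | _, 0, _ => by simp
  | 0, _ + 1, h => by omega
  | n + 1, k + 1, h => by
    rw [qBinom_succ_succ, Nat.succ_sub_succ, qFactorial_succ x k, qFactorial_succ x n]
    obtain rfl | hkn := (Nat.le_of_succ_le_succ h).eq_or_lt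
    · simp [qBinom_eq_zero_of_lt x k.lt_succ_self]
    obtain ⟨d, rfl⟩ := Nat.exists_eq_add_of_lt hkn
    have h₁ := qBinom_mul_qFactorial_mul_qFactorial (n := k + d + 1) (k := k) (by omega)
    have h₂ := qBinom_mul_qFactorial_mul_qFactorial (n := k + d + 1) (k := k + 1) (by omega)
    rw [show k + d + 1 - k = d + 1 by omega, qFactorial_succ] at h₁
    rw [show k + d + 1 - (k + 1) = d by omega, qFactorial_succ] at h₂
    rw [show k + d + 1 - k = d + 1 by omega, qFactorial_succ]
    linear_combination (x ^ (k + 1) - 1) * h₁ + x ^ (k + 1) * (x ^ (d + 1) - 1) * h₂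

theorem prod_one_add_mul_pow_eq_sum_qBinom (n : ℕ) (y : R) :
    ∏ j ∈ range n, (1 + y * x ^ j) =
      ∑ i ∈ range (n + 1), qBinom x n i * x ^ i.choose 2 * y ^ i := by
  induction n generalizing y with
  | zero => simp
  | succ n ih =>
    have hshift : ∏ j ∈ range n, (1 + y * x ^ (j + 1)) = ∏ j ∈ range n, (1 + y * x * x ^ j) := by
      simp only [pow_succ', mul_assoc]
    have hy : ∑ i ∈ range (n + 1), qBinom x n i * x ^ (i + 1).choose 2 * y ^ (i + 1) =
        y * ∑ i ∈ range (n + 1), qBinom x n i * x ^ i.choose 2 * (y * x) ^ i := by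
      rw [mul_sum]
      refine sum_congr rfl fun i _ => ?_
      rw [Nat.choose_two_succ]
      ring
    have hyx : ∑ i ∈ range (n + 1),
          x ^ (i + 1) * qBinom x n (i + 1) * x ^ (i + 1).choose 2 * y ^ (i + 1) + 1 =
        ∑ i ∈ range (n + 1), qBinom x n i * x ^ i.choose 2 * (y * x) ^ i := by
      rw [sum_range_succ _ n, qBinom_eq_zero_of_lt x n.lt_succ_self, sum_range_succ']
      simp only [mul_zero, zero_mul, add_zero, qBinom_zero_right, pow_zero, mul_one,
        Nat.choose_zero_succ]
      exact congrArg (· + 1) (sum_congr rfl fun i _ => by ring)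
    rw [prod_range_succ', hshift, ih, sum_range_succ' _ (n + 1)]
    simp only [qBinom_succ_succ, add_mul, sum_add_distrib, hy, qBinom_zero_right,
      Nat.choose_zero_succ, pow_zero]
    linear_combination -hyx

theorem prod_mul_pow_sub_one_eq_sum_antidiagonal (n : ℕ) (y : R) :
    ∏ j ∈ range n, (y * x ^ j - 1) =
      ∑ p ∈ antidiagonal n, (-1) ^ p.2 * qBinom x n p.1 * x ^ p.1.choose 2 * y ^ p.1 := by
  have hneg : ∏ j ∈ range n, (y * x ^ j - 1) = (-1) ^ n * ∏ j ∈ range n, (1 + -y * x ^ j) := by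
    rw [← card_range n, ← prod_const, card_range, ← prod_mul_distrib]
    exact prod_congr rfl fun _ _ => by ring
  rw [hneg, prod_one_add_mul_pow_eq_sum_qBinom, mul_sum,
    Nat.sum_antidiagonal_eq_sum_range_succ_mk]
  refine sum_congr rfl fun i hi => ?_
  obtain ⟨d, rfl⟩ := Nat.exists_eq_add_of_le (mem_range_succ_iff.1 hi)
  have hsq : (-1 : R) ^ i * (-1) ^ i = 1 := by rw [← mul_pow]; norm_num
  rw [Nat.add_sub_cancel_left, neg_pow y, pow_add]
  linear_combination ((-1) ^ d * qBinom x (i + d) i * x ^ i.choose 2 * y ^ i) * hsq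

lemma qFactorial_sq (n : ℕ) :
    qFactorial (x ^ 2) n = qFactorial x n * ∏ j ∈ range n, (x ^ (j + 1) + 1) := by
  rw [qFactorial, qFactorial, ← prod_mul_distrib]
  exact prod_congr rfl fun _ _ => by ring

end CommRing

section Field

variable {K : Type*} [Field K] {x : K}

lemma qFactorial_ne_zero (hx : ∀ n : ℕ, x ^ (n + 1) ≠ 1) (n : ℕ) : qFactorial x n ≠ 0 :=
  prod_ne_zero_iff.2 fun j _ => sub_ne_zero.2 (hx j)

lemma eq_qBinom_of_mul_qFactorial_mul_qFactorial (hx : ∀ n : ℕ, x ^ (n + 1) ≠ 1) {n k : ℕ}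
    (h : k ≤ n) {c : K} (hc : c * qFactorial x k * qFactorial x (n - k) = qFactorial x n) :
    c = qBinom x n k := by
  refine mul_right_cancel₀ (qFactorial_ne_zero hx k)
    (mul_right_cancel₀ (qFactorial_ne_zero hx (n - k)) ?_)
  rw [hc, qBinom_mul_qFactorial_mul_qFactorial x h]

lemma qBinom_symm_of_eq_add (hx : ∀ n : ℕ, x ^ (n + 1) ≠ 1) {n a b : ℕ} (h : n = a + b) :
    qBinom x n a = qBinom x n b := by
  refine eq_qBinom_of_mul_qFactorial_mul_qFactorial hx (by omega) ?_
  rw [mul_right_comm, show n - b = a by omega, ← show n - a = b by omega,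
    qBinom_mul_qFactorial_mul_qFactorial x (by omega)]

lemma qBinom_succ_succ' (hx : ∀ n : ℕ, x ^ (n + 1) ≠ 1) {n a b : ℕ} (h : n = a + b) :
    qBinom x (n + 1) (a + 1) = qBinom x n (a + 1) + x ^ b * qBinom x n a := by
  obtain _ | c := b
  · obtain rfl : n = a := h
    simp [qBinom_eq_zero_of_lt x n.lt_succ_self]
  · rw [qBinom_symm_of_eq_add hx (show n + 1 = (a + 1) + (c + 1) by omega), qBinom_succ_succ,
      qBinom_symm_of_eq_add hx (show n = (a + 1) + c by omega),
      qBinom_symm_of_eq_add hx (show n = a + (c + 1) by omega) (a := a)]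

lemma qBinom_mul_qBinom_of_eq_add (hx : ∀ n : ℕ, x ^ (n + 1) ≠ 1) {n a b c : ℕ}
    (h : n = a + b + c) :
    qBinom x n a * qBinom x (b + c) b = qBinom x n b * qBinom x (a + c) a := by
  have h₁ := qBinom_mul_qFactorial_mul_qFactorial x (show a ≤ n by omega)
  have h₂ := qBinom_mul_qFactorial_mul_qFactorial x (show b ≤ b + c by omega)
  have h₃ := qBinom_mul_qFactorial_mul_qFactorial x (show b ≤ n by omega)
  have h₄ := qBinom_mul_qFactorial_mul_qFactorial x (show a ≤ a + c by omega)
  rw [show n - a = b + c by omega] at h₁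
  rw [show n - b = a + c by omega] at h₃
  rw [Nat.add_sub_cancel_left] at h₂ h₄
  have hne : qFactorial x a * qFactorial x b * qFactorial x c ≠ 0 := by
    simp only [ne_eq, mul_eq_zero, qFactorial_ne_zero hx, or_self, not_false_eq_true]
  refine mul_right_cancel₀ hne ?_
  linear_combination (qBinom x n a * qFactorial x a) * h₂ + h₁ -
    (qBinom x n b * qFactorial x b) * h₄ - h₃

end Field

section SquareBase

variable {K : Type*} [Field K] {t : K}

lemma sum_antidiagonal_qBinom_sq_mul_pow_snd (ht : ∀ n : ℕ, (t ^ 2) ^ (n + 1) ≠ 1) (k : ℕ) :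
    ∑ p ∈ antidiagonal k,
        qBinom (t ^ 2) k p.1 * (t ^ 2) ^ (p.1.choose 2 + p.2.choose 2) * t ^ p.2 =
      ∑ p ∈ antidiagonal k,
        qBinom (t ^ 2) k p.1 * (t ^ 2) ^ (p.1.choose 2 + p.2.choose 2) * t ^ p.1 := by
  rw [← Nat.sum_antidiagonal_swap]
  refine sum_congr rfl fun p hp => ?_
  rw [Prod.fst_swap, Prod.snd_swap, qBinom_symm_of_eq_add ht (mem_antidiagonal.1 hp).symm,
    add_comm]

lemma sum_antidiagonal_qBinom_sq_mul_pow_succ (ht : ∀ n : ℕ, (t ^ 2) ^ (n + 1) ≠ 1) (k : ℕ) :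
    ∑ p ∈ antidiagonal (k + 1),
        qBinom (t ^ 2) (k + 1) p.1 * (t ^ 2) ^ (p.1.choose 2 + p.2.choose 2) * t ^ p.1 =
      t ^ k * (1 + t ^ (k + 1)) * ∑ p ∈ antidiagonal k,
        qBinom (t ^ 2) k p.1 * (t ^ 2) ^ (p.1.choose 2 + p.2.choose 2) * t ^ p.1 := by
  have hA : ∑ p ∈ antidiagonal (k + 1),
        qBinom (t ^ 2) k p.1 * (t ^ 2) ^ (p.1.choose 2 + p.2.choose 2) * t ^ p.1 =
      t ^ k * ∑ p ∈ antidiagonal k,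
        qBinom (t ^ 2) k p.1 * (t ^ 2) ^ (p.1.choose 2 + p.2.choose 2) * t ^ p.1 := by
    rw [Nat.sum_antidiagonal_succ', qBinom_eq_zero_of_lt _ k.lt_succ_self, zero_mul, zero_mul,
      zero_add, ← sum_antidiagonal_qBinom_sq_mul_pow_snd ht, mul_sum]
    refine sum_congr rfl fun p hp => ?_
    rw [← mem_antidiagonal.1 hp, Nat.choose_two_succ]
    ring
  have hB : ∑ p ∈ antidiagonal k, (t ^ 2) ^ p.2 * qBinom (t ^ 2) k p.1 *
        (t ^ 2) ^ ((p.1 + 1).choose 2 + p.2.choose 2) * t ^ (p.1 + 1) =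
      t ^ k * t ^ (k + 1) * ∑ p ∈ antidiagonal k,
        qBinom (t ^ 2) k p.1 * (t ^ 2) ^ (p.1.choose 2 + p.2.choose 2) * t ^ p.1 := by
    rw [mul_sum]
    refine sum_congr rfl fun p hp => ?_
    rw [← mem_antidiagonal.1 hp, Nat.choose_two_succ]
    ring
  have hpascal : ∀ p ∈ antidiagonal k, qBinom (t ^ 2) (k + 1) (p.1 + 1) *
        (t ^ 2) ^ ((p.1 + 1).choose 2 + p.2.choose 2) * t ^ (p.1 + 1) =
      qBinom (t ^ 2) k (p.1 + 1) * (t ^ 2) ^ ((p.1 + 1).choose 2 + p.2.choose 2) * t ^ (p.1 + 1) +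
        (t ^ 2) ^ p.2 * qBinom (t ^ 2) k p.1 *
          (t ^ 2) ^ ((p.1 + 1).choose 2 + p.2.choose 2) * t ^ (p.1 + 1) := fun p hp => by
    rw [qBinom_succ_succ' ht (mem_antidiagonal.1 hp).symm]
    ring
  rw [Nat.sum_antidiagonal_succ] at hA ⊢
  rw [sum_congr rfl hpascal, sum_add_distrib, hB]
  simp only [qBinom_zero_right] at hA ⊢
  linear_combination hA

theorem sum_antidiagonal_qBinom_sq_mul_pow (ht : ∀ n : ℕ, (t ^ 2) ^ (n + 1) ≠ 1) (k : ℕ) :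
    ∑ p ∈ antidiagonal k,
        qBinom (t ^ 2) k p.1 * (t ^ 2) ^ (p.1.choose 2 + p.2.choose 2) * t ^ p.1 =
      t ^ k.choose 2 * ∏ j ∈ range k, (t ^ (j + 1) + 1) := by
  induction k with
  | zero => simp
  | succ k ih =>
    rw [sum_antidiagonal_qBinom_sq_mul_pow_succ ht, ih, Nat.choose_two_succ, prod_range_succ]
    ring

lemma qBinom_mul_prod_Ico_pow_add_one (ht : ∀ n : ℕ, (t ^ 2) ^ (n + 1) ≠ 1) (i k : ℕ) :
    qBinom t (i + k) i * (∏ j ∈ Ico i (i + k), (t ^ j + 1)) * (t ^ (i + k) + 1) =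
      qBinom (t ^ 2) (i + k) i * (t ^ i + 1) * ∏ j ∈ range k, (t ^ (j + 1) + 1) := by
  have hne (n : ℕ) : qFactorial t n ≠ 0 ∧ ∏ j ∈ range n, (t ^ (j + 1) + 1) ≠ 0 :=
    mul_ne_zero_iff.1 (qFactorial_sq t n ▸ qFactorial_ne_zero ht n)
  have h₁ := qBinom_mul_qFactorial_mul_qFactorial (t ^ 2) (Nat.le_add_right i k)
  have h₂ := qBinom_mul_qFactorial_mul_qFactorial t (Nat.le_add_right i k)
  rw [Nat.add_sub_cancel_left, qFactorial_sq, qFactorial_sq, qFactorial_sq] at h₁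
  rw [Nat.add_sub_cancel_left] at h₂
  have h₃ : (∏ j ∈ range i, (t ^ (j + 1) + 1)) *
        ((∏ j ∈ Ico i (i + k), (t ^ j + 1)) * (t ^ (i + k) + 1)) =
      (t ^ i + 1) * ∏ j ∈ range (i + k), (t ^ (j + 1) + 1) := by
    rw [prod_Ico_eq_prod_range, Nat.add_sub_cancel_left,
      ← prod_range_succ (fun j => t ^ (i + j) + 1), prod_range_succ', prod_range_add]
    simp only [add_zero, add_assoc]
    ring
  refine mul_right_cancel₀ (mul_ne_zero (mul_ne_zero (hne i).2 (hne i).1) (hne k).1) ?_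
  linear_combination ((∏ j ∈ range i, (t ^ (j + 1) + 1)) * (∏ j ∈ Ico i (i + k), (t ^ j + 1)) *
      (t ^ (i + k) + 1)) * h₂ + qFactorial t (i + k) * h₃ - (t ^ i + 1) * h₁

end SquareBase

lemma gbinom_eq_qBinom {q : ℝ} (hq : ∀ n : ℕ, q ^ (n + 1) ≠ 1) {n k : ℕ} (h : k ≤ n) :
    gbinom q n k = qBinom q n k := by
  refine eq_qBinom_of_mul_qFactorial_mul_qFactorial hq h ?_
  obtain ⟨d, rfl⟩ := Nat.exists_eq_add_of_le h
  rw [gbinom, ← Ico_add_one_right_eq_Icc, prod_Ico_eq_prod_range, Nat.add_sub_cancel,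
    prod_div_distrib, Nat.add_sub_cancel_left]
  have hden : ∏ j ∈ range k, (q ^ (1 + j) - 1) = qFactorial q k :=
    prod_congr rfl fun j _ => by rw [add_comm]
  rw [hden, div_mul_cancel₀ _ (qFactorial_ne_zero hq k), add_comm k d, qFactorial, qFactorial,
    prod_range_add, mul_comm]
  refine congrArg _ (prod_congr rfl fun j _ => ?_)
  ring_nf

lemma lhs_summand_eq_sum {q : ℝ} (hq : 1 < q) {i k m : ℕ} (N : ℕ) (h : i + k = m) :
    (-1 : ℝ) ^ k * q ^ (k * (k - 1) / 2) * gbinom q m i * (∏ j ∈ Ico i m, (q ^ j + 1)) *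
        q ^ (2 * i * N) =
      ∑ p ∈ antidiagonal k, (-1) ^ (p.1 + p.2) * qBinom (q ^ 2) m p.1 *
        qBinom (q ^ 2) (i + p.2) i * (q ^ 2) ^ (p.1.choose 2 + p.2.choose 2 + i * N) *
          ((q ^ (i + p.2) + q ^ p.1) / (q ^ m + 1)) := by
  subst h
  have hq₁ (n : ℕ) : q ^ (n + 1) ≠ 1 := (one_lt_pow₀ hq n.succ_ne_zero).ne'
  have hq₂ (n : ℕ) : (q ^ 2) ^ (n + 1) ≠ 1 :=
    (one_lt_pow₀ (one_lt_pow₀ hq two_ne_zero) n.succ_ne_zero).ne'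
  have hterm : ∀ p ∈ antidiagonal k,
      (-1) ^ (p.1 + p.2) * qBinom (q ^ 2) (i + k) p.1 * qBinom (q ^ 2) (i + p.2) i *
        (q ^ 2) ^ (p.1.choose 2 + p.2.choose 2 + i * N) *
          ((q ^ (i + p.2) + q ^ p.1) / (q ^ (i + k) + 1)) =
      (-1) ^ k * qBinom (q ^ 2) (i + k) i * (q ^ 2) ^ (i * N) / (q ^ (i + k) + 1) *
        (q ^ i * (qBinom (q ^ 2) k p.1 * (q ^ 2) ^ (p.1.choose 2 + p.2.choose 2) * q ^ p.2) +
          qBinom (q ^ 2) k p.1 * (q ^ 2) ^ (p.1.choose 2 + p.2.choose 2) * q ^ p.1) := by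
    intro p hp
    rw [← mem_antidiagonal.1 hp]
    linear_combination ((-1) ^ (p.1 + p.2) * (q ^ 2) ^ (p.1.choose 2 + p.2.choose 2 + i * N) *
      ((q ^ (i + p.2) + q ^ p.1) / (q ^ (i + (p.1 + p.2)) + 1))) *
      qBinom_mul_qBinom_of_eq_add hq₂ (show i + (p.1 + p.2) = p.1 + i + p.2 by ring)
  rw [sum_congr rfl hterm, ← mul_sum, sum_add_distrib, ← mul_sum,
    sum_antidiagonal_qBinom_sq_mul_pow_snd hq₂, sum_antidiagonal_qBinom_sq_mul_pow hq₂,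
    gbinom_eq_qBinom hq₁ (Nat.le_add_right i k), ← Nat.choose_two_right, mul_assoc 2, pow_mul]
  have hpos : q ^ (i + k) + 1 ≠ 0 := by positivity
  field_simp
  linear_combination qBinom_mul_prod_Ico_pow_add_one hq₂ i k

lemma rhs_summand_eq_sum {q : ℝ} (hq : 1 < q) {ℓ s m N : ℕ} (h : ℓ + s = m) (hN : m ≤ N) :
    (-1 : ℝ) ^ ℓ * q ^ (ℓ * (ℓ - 1) + s * (s - 1)) * gbinom (q ^ 2) m ℓ *
        ((q ^ s + q ^ ℓ) / (q ^ m + 1)) * ∏ j ∈ range s, (q ^ (2 * (N - j)) - 1) =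
      ∑ p ∈ antidiagonal s, (-1) ^ (ℓ + p.2) * qBinom (q ^ 2) m ℓ *
        qBinom (q ^ 2) (p.1 + p.2) p.1 * (q ^ 2) ^ (ℓ.choose 2 + p.2.choose 2 + p.1 * N) *
          ((q ^ (p.1 + p.2) + q ^ ℓ) / (q ^ m + 1)) := by
  obtain ⟨r, rfl⟩ := Nat.exists_eq_add_of_le hN
  subst h
  have hq₂ (n : ℕ) : (q ^ 2) ^ (n + 1) ≠ 1 :=
    (one_lt_pow₀ (one_lt_pow₀ hq two_ne_zero) n.succ_ne_zero).ne'
  have hprod : ∏ j ∈ range s, (q ^ (2 * (ℓ + s + r - j)) - 1) =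
      ∏ j ∈ range s, ((q ^ 2) ^ (ℓ + r + 1) * (q ^ 2) ^ j - 1) := by
    rw [← prod_range_reflect]
    refine prod_congr rfl fun j hj => ?_
    rw [← pow_add, ← pow_mul]
    congr 2
    have := mem_range.1 hj
    omega
  rw [hprod, prod_mul_pow_sub_one_eq_sum_antidiagonal, mul_sum,
    gbinom_eq_qBinom hq₂ (Nat.le_add_right ℓ s)]
  refine sum_congr rfl fun ⟨i, u⟩ hp => ?_
  obtain rfl : i + u = s := mem_antidiagonal.1 hp
  have hpow : q ^ (ℓ * (ℓ - 1) + (i + u) * (i + u - 1)) * (q ^ 2) ^ i.choose 2 *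
      ((q ^ 2) ^ (ℓ + r + 1)) ^ i =
        (q ^ 2) ^ (ℓ.choose 2 + u.choose 2 + i * (ℓ + (i + u) + r)) := by
    rw [← pow_mul, ← pow_mul, ← pow_mul, ← pow_mul, ← pow_add, ← pow_add,
      ← Nat.two_mul_choose_two, ← Nat.two_mul_choose_two, Nat.choose_two_add]
    congr 1
    linarith [Nat.two_mul_choose_two_add_self i]
  rw [← hpow]
  ring

theorem stmt5 (q : ℝ) (hq : 1 < q) (m N : ℕ) (hmN : m ≤ N) :
    ∑ i ∈ Finset.range (m + 1),
      (-1 : ℝ) ^ (m - i) * q ^ ((m - i) * (m - i - 1) / 2) * gbinom q m i *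
        (∏ j ∈ Finset.Ico i m, (q ^ j + 1)) * q ^ (2 * i * N) =
    ∑ ℓ ∈ Finset.range (m + 1),
      (-1 : ℝ) ^ ℓ * q ^ (ℓ * (ℓ - 1) + (m - ℓ) * (m - ℓ - 1)) * gbinom (q ^ 2) m ℓ *
        ((q ^ (m - ℓ) + q ^ ℓ) / (q ^ m + 1)) *
        ∏ j ∈ Finset.range (m - ℓ), (q ^ (2 * (N - j)) - 1) := by
  let F : ℕ → ℕ → ℕ → ℝ := fun ℓ i u => (-1) ^ (ℓ + u) * qBinom (q ^ 2) m ℓ *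
    qBinom (q ^ 2) (i + u) i * (q ^ 2) ^ (ℓ.choose 2 + u.choose 2 + i * N) *
    ((q ^ (i + u) + q ^ ℓ) / (q ^ m + 1))
  calc _ = ∑ i ∈ range (m + 1), ∑ p ∈ antidiagonal (m - i), F p.1 i p.2 :=
        sum_congr rfl fun i hi =>
          lhs_summand_eq_sum hq N (Nat.add_sub_of_le (mem_range_succ_iff.1 hi))
    _ = ∑ ℓ ∈ range (m + 1), ∑ p ∈ antidiagonal (m - ℓ), F ℓ p.1 p.2 :=
        sum_range_sum_antidiagonal_comm (fun i ℓ u => F ℓ i u) m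
    _ = _ := sum_congr rfl fun ℓ hℓ =>
        (rhs_summand_eq_sum hq (Nat.add_sub_of_le (mem_range_succ_iff.1 hℓ)) hmN).symm
end

section
/- Let q be a real number with q > 1 and let N, m be integers with 0 ≤ N ≤ m. Then Σ_{i=0}^{N} (−1)^{N−i} · q^{(N−i)(N−i−1)/2} · [N choose i]_q · (∏_{j=i+1}^{N} (q^j + 1)) · q^{2im} = Σ_{ℓ=0}^{N} (−1)^{ℓ} · q^{ℓ² + (N−ℓ)(N−ℓ−1)} · [N choose ℓ]_{q²} · ∏_{i=1}^{N−ℓ} (q^{2(m−N+ℓ+i)} − 1). -/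
namespace Stmt8

noncomputable def fct (b : ℝ) (n : ℕ) : ℝ := ∏ j ∈ Finset.Icc 1 n, (b ^ j - 1)

lemma olp {b : ℝ} (hb : 1 < b) {j : ℕ} (hj : 1 ≤ j) : 1 < b ^ j :=
  one_lt_pow₀ hb (by omega)

lemma fct_pos {b : ℝ} (hb : 1 < b) (n : ℕ) : 0 < fct b n := by
  apply Finset.prod_pos
  intro j hj
  have := olp hb (Finset.mem_Icc.mp hj).1
  linarith

lemma fct_succ (b : ℝ) (n : ℕ) : fct b (n + 1) = fct b n * (b ^ (n + 1) - 1) := by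
  unfold fct
  rw [Finset.prod_Icc_succ_top (by omega)]

lemma shift_prod (g : ℕ → ℝ) (a k : ℕ) :
    ∏ j ∈ Finset.Icc 1 k, g (a + j) = ∏ j ∈ Finset.Icc (a + 1) (a + k), g j := by
  rw [← Finset.map_add_left_Icc 1 k a, Finset.prod_map]
  rfl

lemma icc_shift_mul (g : ℕ → ℝ) (a k : ℕ) :
    (∏ j ∈ Finset.Icc 1 a, g j) * ∏ j ∈ Finset.Icc 1 k, g (a + j)
      = ∏ j ∈ Finset.Icc 1 (a + k), g j := by
  rw [shift_prod g a k]
  have h1 : Finset.Icc 1 a = Finset.Ioc 0 a := rfl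
  have h2 : Finset.Icc (a+1) (a+k) = Finset.Ioc a (a+k) := by
    ext x; simp [Finset.mem_Icc, Finset.mem_Ioc]
  have h3 : Finset.Icc 1 (a+k) = Finset.Ioc 0 (a+k) := rfl
  rw [h1, h2, h3, Finset.prod_Ioc_consecutive _ (by omega) (by omega)]

lemma fct_mul (b : ℝ) (a k : ℕ) :
    fct b a * ∏ j ∈ Finset.Icc 1 k, (b ^ (a + j) - 1) = fct b (a + k) :=
  icc_shift_mul (fun j => b ^ j - 1) a k

lemma gbinom_eq {b : ℝ} (hb : 1 < b) {n k : ℕ} (hkn : k ≤ n) :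
    gbinom b n k = fct b n / (fct b k * fct b (n - k)) := by
  unfold gbinom
  rw [Finset.prod_div_distrib]
  have hnum : ∏ j ∈ Finset.Icc 1 k, (b ^ (n - k + j) - 1) = fct b n / fct b (n - k) := by
    rw [eq_div_iff (fct_pos hb (n-k)).ne', mul_comm, fct_mul]
    congr 1; omega
  rw [hnum]
  unfold fct
  ring

lemma gbinom_pos {b : ℝ} (hb : 1 < b) {n k : ℕ} (hkn : k ≤ n) : 0 < gbinom b n k := by
  rw [gbinom_eq hb hkn]
  exact div_pos (fct_pos hb n) (mul_pos (fct_pos hb k) (fct_pos hb (n-k)))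

lemma fct_zero (b : ℝ) : fct b 0 = 1 := by simp [fct]

lemma gbinom_zero (b : ℝ) (n : ℕ) : gbinom b n 0 = 1 := by simp [gbinom]

lemma gbinom_self {b : ℝ} (hb : 1 < b) (n : ℕ) : gbinom b n n = 1 := by
  rw [gbinom_eq hb le_rfl, Nat.sub_self, fct_zero, mul_one,
    div_self (fct_pos hb n).ne']

lemma gbinom_symm {b : ℝ} (hb : 1 < b) {n k : ℕ} (hkn : k ≤ n) :
    gbinom b n k = gbinom b n (n - k) := by
  rw [gbinom_eq hb hkn, gbinom_eq hb (by omega)]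
  have : n - (n - k) = k := by omega
  rw [this, mul_comm]

lemma gbinom_trinomial {b : ℝ} (hb : 1 < b) {n j l : ℕ} (h : j + l ≤ n) :
    gbinom b n l * gbinom b (n - l) j = gbinom b n j * gbinom b (n - j) l := by
  rw [gbinom_eq hb (by omega), gbinom_eq hb (by omega),
      gbinom_eq hb (by omega), gbinom_eq hb (by omega)]
  have h1 : n - l - j = n - j - l := by omega
  rw [h1]
  have p1 := (fct_pos hb n).ne'
  have p2 := (fct_pos hb l).ne'
  have p3 := (fct_pos hb j).ne'
  have p4 := (fct_pos hb (n - l)).ne'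
  have p5 := (fct_pos hb (n - j)).ne'
  have p6 := (fct_pos hb (n - j - l)).ne'
  field_simp

lemma ratio1 {b : ℝ} (hb : 1 < b) {n k : ℕ} (hkn : k ≤ n) :
    gbinom b (n + 1) (k + 1) * (b ^ (k + 1) - 1) = gbinom b n k * (b ^ (n + 1) - 1) := by
  rw [gbinom_eq hb (by omega), gbinom_eq hb hkn]
  have e1 : n + 1 - (k + 1) = n - k := by omega
  rw [e1, fct_succ b n, fct_succ b k]
  have p2 := (fct_pos hb k).ne'
  have p3 := (fct_pos hb (n - k)).ne'
  have p4 : b ^ (k+1) - 1 ≠ 0 := by have := olp hb (by omega : 1 ≤ k+1); linarith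
  field_simp

lemma ratio2 {b : ℝ} (hb : 1 < b) {n k : ℕ} (hkn : k < n) :
    gbinom b n (k + 1) * (b ^ (k + 1) - 1) = gbinom b n k * (b ^ (n - k) - 1) := by
  rw [gbinom_eq hb (by omega), gbinom_eq hb (by omega)]
  rw [fct_succ b k]
  obtain ⟨d, hd⟩ : ∃ d, n - k = d + 1 := ⟨n - k - 1, by omega⟩
  have e5 : n - (k + 1) = d := by omega
  rw [e5, hd, fct_succ b d]
  have p2 := (fct_pos hb k).ne'
  have p3 := (fct_pos hb d).ne'
  have p4 : b ^ (k+1) - 1 ≠ 0 := by have := olp hb (by omega : 1 ≤ k+1); linarith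
  have p5 : b ^ (d+1) - 1 ≠ 0 := by have := olp hb (by omega : 1 ≤ d+1); linarith
  field_simp

/-- Corrected Gaussian binomial: zero out of range. -/
noncomputable def gb (b : ℝ) (n k : ℕ) : ℝ := if k ≤ n then gbinom b n k else 0

lemma gb_of_le {b : ℝ} {n k : ℕ} (h : k ≤ n) : gb b n k = gbinom b n k := if_pos h

lemma gb_oob (b : ℝ) {n k : ℕ} (h : n < k) : gb b n k = 0 := if_neg (by omega)

lemma gb_zero (b : ℝ) (n : ℕ) : gb b n 0 = 1 := by
  rw [gb_of_le (Nat.zero_le n), gbinom_zero]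

lemma gb_symm {b : ℝ} (hb : 1 < b) {n k : ℕ} (hkn : k ≤ n) :
    gb b n k = gb b n (n - k) := by
  rw [gb_of_le hkn, gb_of_le (by omega)]
  exact gbinom_symm hb hkn

lemma gb_pascal {b : ℝ} (hb : 1 < b) (n k : ℕ) :
    gb b (n + 1) (k + 1) = b ^ (n - k) * gb b n k + gb b n (k + 1) := by
  rcases lt_trichotomy k n with h | h | h
  · rw [gb_of_le (by omega), gb_of_le (by omega), gb_of_le (by omega)]
    have key : b ^ (n + 1) - 1 = b ^ (n - k) * (b ^ (k + 1) - 1) + (b ^ (n - k) - 1) := by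
      have hme : b ^ (n - k) * b ^ (k + 1) = b ^ (n + 1) := by
        rw [← pow_add]; congr 1; omega
      nlinarith [hme]
    have p4 : b ^ (k+1) - 1 ≠ 0 := by have := olp hb (by omega : 1 ≤ k+1); linarith
    apply mul_right_cancel₀ p4
    have r1 := ratio1 hb (le_of_lt h)
    have r2 := ratio2 hb h
    linear_combination r1 - r2 + gbinom b n k * key
  · subst h
    have h1 : ¬ (k + 1 ≤ k) := by omega
    simp only [gb, if_pos (le_refl (k+1)), if_pos (le_refl k), if_neg h1, Nat.sub_self]
    rw [gbinom_self hb, gbinom_self hb]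
    simp
  · have h1 : ¬ (k + 1 ≤ n + 1) := by omega
    have h2 : ¬ (k ≤ n) := by omega
    have h3 : ¬ (k + 1 ≤ n) := by omega
    simp only [gb, if_neg h1, if_neg h2, if_neg h3]
    ring

/-! ### Core identity -/

noncomputable def ee (M ℓ : ℕ) : ℝ := (2*(ℓ:ℝ) - M) * (2*(ℓ:ℝ) - M + 1) / 2

lemma core {q : ℝ} (hq : 1 < q) (M : ℕ) :
    ∑ ℓ ∈ Finset.range (M+1), q ^ (ee M ℓ) * gb (q^2) M ℓ
      = ∏ r ∈ Finset.Icc 1 M, (q ^ r + 1) := by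
  have hq0 : 0 < q := lt_trans one_pos hq
  have ht : 1 < q^2 := by nlinarith
  induction M with
  | zero =>
    simp [ee, gb_zero, Real.rpow_zero]
  | succ M ih =>
    rw [Finset.sum_range_succ' (fun ℓ => q ^ (ee (M+1) ℓ) * gb (q^2) (M+1) ℓ) (M+1)]
    have hsplit : ∀ ℓ ∈ Finset.range (M+1),
        q ^ (ee (M+1) (ℓ+1)) * gb (q^2) (M+1) (ℓ+1)
        = q ^ ((M:ℝ)+1) * (q ^ (ee M ℓ) * gb (q^2) M ℓ)
          + q ^ (ee (M+1) (ℓ+1)) * gb (q^2) M (ℓ+1) := by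
      intro ℓ hℓ
      have hℓM : ℓ ≤ M := by simpa using Nat.lt_succ_iff.mp (Finset.mem_range.mp hℓ)
      rw [gb_pascal ht M ℓ, mul_add]
      congr 1
      have hpow : ((q^2) : ℝ) ^ (M - ℓ) = q ^ (2*((M:ℝ) - ℓ)) := by
        rw [← pow_mul, ← Real.rpow_natCast q (2 * (M - ℓ))]
        congr 1
        push_cast [Nat.cast_sub hℓM]
        ring
      rw [hpow, ← mul_assoc, ← mul_assoc, ← Real.rpow_add hq0, ← Real.rpow_add hq0]
      congr 2
      unfold ee
      push_cast
      ring
    rw [Finset.sum_congr rfl hsplit, Finset.sum_add_distrib, ← Finset.mul_sum, ih, add_assoc]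
    have hV : (∑ ℓ ∈ Finset.range (M+1), q ^ (ee (M+1) (ℓ+1)) * gb (q^2) M (ℓ+1))
        + q ^ (ee (M+1) 0) * gb (q^2) (M+1) 0
        = ∑ ℓ ∈ Finset.range (M+2), q ^ (ee (M+1) ℓ) * gb (q^2) M ℓ := by
      rw [Finset.sum_range_succ' (fun ℓ => q ^ (ee (M+1) ℓ) * gb (q^2) M ℓ) (M+1)]
      rw [gb_zero, gb_zero]
    rw [hV]
    have hdrop : ∑ ℓ ∈ Finset.range (M+2), q ^ (ee (M+1) ℓ) * gb (q^2) M ℓ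
        = ∑ ℓ ∈ Finset.range (M+1), q ^ (ee (M+1) ℓ) * gb (q^2) M ℓ := by
      rw [Finset.sum_range_succ, gb_oob (q^2) (Nat.lt_succ_self M), mul_zero, add_zero]
    rw [hdrop]
    have hrefl : ∑ ℓ ∈ Finset.range (M+1), q ^ (ee (M+1) ℓ) * gb (q^2) M ℓ
        = ∑ ℓ ∈ Finset.range (M+1), q ^ (ee M ℓ) * gb (q^2) M ℓ := by
      rw [← Finset.sum_range_reflect]
      apply Finset.sum_congr rfl
      intro ℓ hℓ
      have hℓM : ℓ ≤ M := by simpa using Nat.lt_succ_iff.mp (Finset.mem_range.mp hℓ)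
      have h1 : M + 1 - 1 - ℓ = M - ℓ := by omega
      rw [h1, ← gb_symm ht hℓM]
      congr 1
      unfold ee
      push_cast [Nat.cast_sub hℓM]
      ring
    rw [hrefl, ih, Finset.prod_Icc_succ_top (by omega : 1 ≤ M + 1)]
    have hnc : q ^ ((M:ℝ)+1) = q ^ (M+1) := by
      rw [← Real.rpow_natCast q (M+1)]; push_cast; ring_nf
    rw [hnc]
    ring

/-! ### q-binomial expansion of the product -/

def tri : ℕ → ℕ
  | 0 => 0
  | j + 1 => tri j + j + 1

lemma tri_cast (j : ℕ) : (tri j : ℝ) = j * (j + 1) / 2 := by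
  induction j with
  | zero => simp [tri]
  | succ j ih => rw [tri]; push_cast; rw [ih]; ring

noncomputable def cc (b : ℝ) (k j : ℕ) : ℝ := (-1:ℝ)^(k+j) * b ^ tri j * gb b k j

lemma expand {b : ℝ} (hb : 1 < b) (k : ℕ) (z : ℝ) :
    ∏ i ∈ Finset.Icc 1 k, (z * b ^ i - 1)
    = ∑ j ∈ Finset.range (k+1), cc b k j * z ^ j := by
  induction k with
  | zero => simp [cc, tri, gb_zero]
  | succ k ih =>
    rw [Finset.prod_Icc_succ_top (by omega : 1 ≤ k + 1), ih]
    have key : ∑ j ∈ Finset.range (k+2), cc b (k+1) j * z ^ j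
        = b ^ (k+1) * z * (∑ j ∈ Finset.range (k+1), cc b k j * z ^ j)
          - (∑ j ∈ Finset.range (k+1), cc b k j * z ^ j) := by
      rw [Finset.sum_range_succ' (fun j => cc b (k+1) j * z ^ j) (k+1)]
      have hterm : ∀ j ∈ Finset.range (k+1),
          cc b (k+1) (j+1) * z ^ (j+1)
          = b ^ (k+1) * z * (cc b k j * z ^ j) - cc b k (j+1) * z ^ (j+1) := by
        intro j hj
        have hjk : j ≤ k := Nat.lt_succ_iff.mp (Finset.mem_range.mp hj)
        unfold cc
        rw [gb_pascal hb k j]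
        have hsign : (-1:ℝ)^(k+1+(j+1)) = (-1:ℝ)^(k+j) := by
          rw [show k+1+(j+1) = (k+j)+2 by omega, pow_add]; norm_num
        have hpow : (b:ℝ) ^ tri (j+1) * b ^ (k-j) = b ^ (k+1) * b ^ tri j := by
          rw [← pow_add, ← pow_add]; congr 1
          have : tri (j+1) = tri j + j + 1 := rfl
          omega
        have hsign2 : (-1:ℝ)^(k+(j+1)) = -(-1:ℝ)^(k+j) := by
          rw [show k+(j+1) = (k+j)+1 by omega, pow_succ]; ring
        rw [hsign, hsign2]
        linear_combination ((-1:ℝ)^(k+j) * gb b k j * z^(j+1)) * hpow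
      rw [Finset.sum_congr rfl hterm, Finset.sum_sub_distrib, ← Finset.mul_sum]
      have htail : ∑ j ∈ Finset.range (k+1), cc b k (j+1) * z ^ (j+1)
          = (∑ j ∈ Finset.range (k+1), cc b k j * z ^ j) - cc b k 0 * z ^ 0 := by
        have h1 := Finset.sum_range_succ' (fun j => cc b k j * z ^ j) (k+1)
        have htop : ∑ j ∈ Finset.range (k+2), cc b k j * z ^ j
            = ∑ j ∈ Finset.range (k+1), cc b k j * z ^ j := by
          rw [Finset.sum_range_succ]
          have hz : cc b k (k+1) * z ^ (k+1) = 0 := by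
            simp [cc, gb_oob b (Nat.lt_succ_self k)]
          rw [hz, add_zero]
        linarith [h1, htop]
      rw [htail]
      have hc0 : cc b (k+1) 0 * z ^ 0 = -(cc b k 0 * z ^ 0) := by
        simp [cc, gb_zero, tri, pow_succ]
      rw [hc0]
      ring
    rw [key]
    ring

/-! ### casts -/

lemma cast_dd (d : ℕ) : ((d * (d - 1) : ℕ) : ℝ) = (d:ℝ) * ((d:ℝ) - 1) := by
  cases d with
  | zero => simp
  | succ e => push_cast [Nat.succ_sub_one]; ring

lemma cast_dd2 (d : ℕ) : ((d * (d - 1) / 2 : ℕ) : ℝ) = (d:ℝ) * ((d:ℝ) - 1) / 2 := by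
  rw [← Nat.choose_two_right, Nat.cast_choose_two]

lemma neg_one_pow_sub {N j : ℕ} (h : j ≤ N) : (-1:ℝ)^(N+j) = (-1:ℝ)^(N-j) := by
  rw [show N+j = (N-j)+2*j by omega, pow_add, pow_mul]
  norm_num

/-! ### mixed-base lemma -/

lemma gbinom_sq {q : ℝ} (hq : 1 < q) {N j : ℕ} (hj : j ≤ N) :
    gbinom (q^2) N j * ∏ r ∈ Finset.Icc 1 (N-j), (q^r+1)
    = gbinom q N j * ∏ r ∈ Finset.Icc (j+1) N, (q^r+1) := by
  have hq0 : 0 < q := lt_trans one_pos hq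
  have hp : ∀ i : ℕ, (0:ℝ) < q^i + 1 := fun i => by positivity
  have key : gbinom (q^2) N j = gbinom q N j *
      ((∏ i ∈ Finset.Icc 1 j, (q^(N-j+i)+1)) / (∏ i ∈ Finset.Icc 1 j, (q^i+1))) := by
    unfold gbinom
    calc ∏ i ∈ Finset.Icc 1 j, ((q^2) ^ (N - j + i) - 1) / ((q^2) ^ i - 1)
        = ∏ i ∈ Finset.Icc 1 j,
            (((q ^ (N-j+i) - 1) / (q^i - 1)) * ((q^(N-j+i)+1) / (q^i+1))) := by
          apply Finset.prod_congr rfl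
          intro i hi
          have h2 : ((q^2):ℝ)^(N-j+i) = (q^(N-j+i))^2 := by
            rw [← pow_mul, mul_comm 2 (N-j+i), pow_mul]
          have h3 : ((q^2):ℝ)^i = (q^i)^2 := by
            rw [← pow_mul, mul_comm 2 i, pow_mul]
          rw [h2, h3, div_mul_div_comm]
          congr 1 <;> ring
      _ = (∏ i ∈ Finset.Icc 1 j, (q ^ (N-j+i) - 1) / (q^i - 1)) *
            ∏ i ∈ Finset.Icc 1 j, ((q^(N-j+i)+1) / (q^i+1)) := Finset.prod_mul_distrib
      _ = gbinom q N j *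
            ((∏ i ∈ Finset.Icc 1 j, (q^(N-j+i)+1)) / (∏ i ∈ Finset.Icc 1 j, (q^i+1))) := by
          rw [← Finset.prod_div_distrib]
          unfold gbinom
          rfl
  rw [key]
  have hshift : (∏ i ∈ Finset.Icc 1 (N-j), (q^i+1)) * (∏ i ∈ Finset.Icc 1 j, (q^(N-j+i)+1))
      = ∏ i ∈ Finset.Icc 1 N, (q^i+1) := by
    have h2 := icc_shift_mul (fun i => q^i+1) (N-j) j
    simpa [show N-j+j = N by omega] using h2
  have hsplit : (∏ i ∈ Finset.Icc 1 j, (q^i+1)) * (∏ i ∈ Finset.Icc (j+1) N, (q^i+1))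
      = ∏ i ∈ Finset.Icc 1 N, (q^i+1) := by
    have h2 := icc_shift_mul (fun i => q^i+1) j (N-j)
    rw [shift_prod (fun i => q^i+1) j (N-j)] at h2
    simpa [show j+(N-j) = N by omega] using h2
  have P2pos : (0:ℝ) < ∏ i ∈ Finset.Icc 1 j, (q^i+1) :=
    Finset.prod_pos (fun i _ => hp i)
  field_simp
  linear_combination gbinom q N j * hshift - gbinom q N j * hsplit

/-! ### per-coefficient identity -/

lemma per_j {q : ℝ} (hq : 1 < q) {N j m : ℕ} (hj : j ≤ N) (hNm : N ≤ m) :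
    ∑ ℓ ∈ Finset.range (N - j + 1),
      ((-1:ℝ)^ℓ * q ^ (ℓ^2 + (N-ℓ)*(N-ℓ-1)) * gbinom (q^2) N ℓ) *
        (cc (q^2) (N-ℓ) j * (((q^2):ℝ)^(m-N+ℓ))^j)
    = (-1:ℝ)^(N-j) * q ^ ((N-j)*(N-j-1)/2) * gbinom q N j *
        (∏ r ∈ Finset.Icc (j+1) N, (q^r+1)) * q ^ (2*j*m) := by
  have hq0 : 0 < q := lt_trans one_pos hq
  have ht : 1 < q^2 := by nlinarith
  have hterm : ∀ ℓ ∈ Finset.range (N - j + 1),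
      ((-1:ℝ)^ℓ * q ^ (ℓ^2 + (N-ℓ)*(N-ℓ-1)) * gbinom (q^2) N ℓ) *
        (cc (q^2) (N-ℓ) j * (((q^2):ℝ)^(m-N+ℓ))^j)
      = ((-1:ℝ)^(N+j) * gbinom (q^2) N j *
          q ^ (2*(j:ℝ)*(m:ℝ) + (↑(N-j) * (↑(N-j) - 1))/2)) *
        (q ^ (ee (N-j) ℓ) * gb (q^2) (N-j) ℓ) := by
    intro ℓ hℓ'
    have hℓ : ℓ ≤ N - j := Nat.lt_succ_iff.mp (Finset.mem_range.mp hℓ')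
    have hjNℓ : j ≤ N - ℓ := by omega
    unfold cc
    rw [gb_of_le hjNℓ]
    have hsgn : (-1:ℝ)^ℓ * (-1:ℝ)^((N-ℓ)+j) = (-1:ℝ)^(N+j) := by
      rw [← pow_add]; congr 1; omega
    have htri := gbinom_trinomial ht (show j + ℓ ≤ N by omega)
    have hpw : q ^ (ℓ^2 + (N-ℓ)*(N-ℓ-1)) * (((q^2):ℝ) ^ tri j * (((q^2):ℝ)^(m-N+ℓ))^j)
        = q ^ (2*(j:ℝ)*(m:ℝ) + (↑(N-j) * (↑(N-j) - 1))/2) * q ^ (ee (N-j) ℓ) := by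
      rw [← pow_mul, ← pow_mul, ← pow_mul, ← pow_add, ← pow_add,
        ← Real.rpow_natCast q (ℓ^2 + (N-ℓ)*(N-ℓ-1) + (2 * tri j + 2*((m-N+ℓ)*j))),
        ← Real.rpow_add hq0]
      congr 1
      have hMj : (↑(N-j) : ℝ) = (N:ℝ) - j := by
        push_cast [Nat.cast_sub hj]; ring
      unfold ee
      rw [hMj]
      obtain ⟨d, rfl⟩ : ∃ d, N = ℓ + d := ⟨N-ℓ, by omega⟩
      obtain ⟨e, rfl⟩ : ∃ e, m = ℓ + d + e := ⟨m-(ℓ+d), by omega⟩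
      simp only [Nat.add_sub_cancel_left]
      rw [Nat.cast_add, Nat.cast_add, cast_dd]
      push_cast [tri_cast]
      ring
    calc ((-1:ℝ)^ℓ * q ^ (ℓ^2 + (N-ℓ)*(N-ℓ-1)) * gbinom (q^2) N ℓ) *
          (((-1:ℝ)^((N-ℓ)+j) * ((q^2):ℝ) ^ tri j * gbinom (q^2) (N-ℓ) j) *
            (((q^2):ℝ)^(m-N+ℓ))^j)
        = ((-1:ℝ)^ℓ * (-1:ℝ)^((N-ℓ)+j)) *
            (q ^ (ℓ^2 + (N-ℓ)*(N-ℓ-1)) * (((q^2):ℝ) ^ tri j * (((q^2):ℝ)^(m-N+ℓ))^j)) *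
            (gbinom (q^2) N ℓ * gbinom (q^2) (N-ℓ) j) := by ring
      _ = ((-1:ℝ)^(N+j)) *
            (q ^ (2*(j:ℝ)*(m:ℝ) + (↑(N-j) * (↑(N-j) - 1))/2) * q ^ (ee (N-j) ℓ)) *
            (gbinom (q^2) N j * gbinom (q^2) (N-j) ℓ) := by rw [hsgn, hpw, htri]
      _ = ((-1:ℝ)^(N+j) * gbinom (q^2) N j *
            q ^ (2*(j:ℝ)*(m:ℝ) + (↑(N-j) * (↑(N-j) - 1))/2)) *
          (q ^ (ee (N-j) ℓ) * gb (q^2) (N-j) ℓ) := by rw [gb_of_le hℓ]; ring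
  rw [Finset.sum_congr rfl hterm, ← Finset.mul_sum, core hq (N-j)]
  rw [neg_one_pow_sub hj]
  have hC : q ^ (2*(j:ℝ)*(m:ℝ) + (↑(N-j) * (↑(N-j) - 1))/2)
      = q ^ ((N-j)*(N-j-1)/2) * q ^ (2*j*m) := by
    rw [← Real.rpow_natCast q ((N-j)*(N-j-1)/2), ← Real.rpow_natCast q (2*j*m),
      ← Real.rpow_add hq0]
    congr 1
    rw [show (N-j)*(N-j-1)/2 = (N-j)*((N-j)-1)/2 from rfl, cast_dd2]
    push_cast
    ring
  rw [hC]
  linear_combination ((-1:ℝ)^(N-j) * q^((N-j)*(N-j-1)/2) * q^(2*j*m)) * gbinom_sq hq hj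

noncomputable def Gt (q : ℝ) (N m ℓ j : ℕ) : ℝ :=
  if j ≤ N - ℓ then
    ((-1:ℝ)^ℓ * q ^ (ℓ^2 + (N-ℓ)*(N-ℓ-1)) * gbinom (q^2) N ℓ) *
      (cc (q^2) (N-ℓ) j * (((q^2):ℝ)^(m-N+ℓ))^j)
  else 0

lemma Gt_pos {q : ℝ} {N m ℓ j : ℕ} (h : j ≤ N - ℓ) :
    Gt q N m ℓ j = ((-1:ℝ)^ℓ * q ^ (ℓ^2 + (N-ℓ)*(N-ℓ-1)) * gbinom (q^2) N ℓ) *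
      (cc (q^2) (N-ℓ) j * (((q^2):ℝ)^(m-N+ℓ))^j) := if_pos h

lemma Gt_neg {q : ℝ} {N m ℓ j : ℕ} (h : ¬ j ≤ N - ℓ) : Gt q N m ℓ j = 0 := if_neg h

end Stmt8

open Stmt8 in
theorem stmt8 (q : ℝ) (hq : 1 < q) (N m : ℕ) (hNm : N ≤ m) :
    ∑ i ∈ Finset.range (N + 1),
      (-1 : ℝ) ^ (N - i) * q ^ ((N - i) * (N - i - 1) / 2) * gbinom q N i *
        (∏ j ∈ Finset.Icc (i + 1) N, (q ^ j + 1)) * q ^ (2 * i * m) =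
    ∑ ℓ ∈ Finset.range (N + 1),
      (-1 : ℝ) ^ ℓ * q ^ (ℓ ^ 2 + (N - ℓ) * (N - ℓ - 1)) * gbinom (q ^ 2) N ℓ *
        ∏ i ∈ Finset.Icc 1 (N - ℓ), (q ^ (2 * (m - N + ℓ + i)) - 1) := by
  have hq0 : 0 < q := lt_trans one_pos hq
  have ht : 1 < q ^ 2 := by nlinarith
  symm
  have h1 : ∀ ℓ ∈ Finset.range (N+1),
      (-1 : ℝ) ^ ℓ * q ^ (ℓ ^ 2 + (N - ℓ) * (N - ℓ - 1)) * gbinom (q ^ 2) N ℓ *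
        ∏ i ∈ Finset.Icc 1 (N - ℓ), (q ^ (2 * (m - N + ℓ + i)) - 1)
      = ∑ j ∈ Finset.range (N+1), Gt q N m ℓ j := by
    intro ℓ hℓ'
    have hℓ : ℓ ≤ N := Nat.lt_succ_iff.mp (Finset.mem_range.mp hℓ')
    have hprod : ∏ i ∈ Finset.Icc 1 (N - ℓ), (q ^ (2 * (m - N + ℓ + i)) - 1)
        = ∏ i ∈ Finset.Icc 1 (N - ℓ), ((((q^2):ℝ)^(m-N+ℓ)) * ((q^2):ℝ) ^ i - 1) := by
      apply Finset.prod_congr rfl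
      intro i hi
      congr 1
      rw [← pow_mul, ← pow_mul, ← pow_add]
      congr 1
      omega
    rw [hprod, expand ht (N-ℓ) (((q^2):ℝ)^(m-N+ℓ)), Finset.mul_sum]
    calc ∑ j ∈ Finset.range (N-ℓ+1),
          (-1 : ℝ) ^ ℓ * q ^ (ℓ ^ 2 + (N - ℓ) * (N - ℓ - 1)) * gbinom (q ^ 2) N ℓ *
            (cc (q^2) (N-ℓ) j * (((q^2):ℝ)^(m-N+ℓ)) ^ j)
        = ∑ j ∈ Finset.range (N-ℓ+1), Gt q N m ℓ j := by
          apply Finset.sum_congr rfl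
          intro j hj
          rw [Gt_pos (Nat.lt_succ_iff.mp (Finset.mem_range.mp hj))]
      _ = ∑ j ∈ Finset.range (N+1), Gt q N m ℓ j := by
          apply Finset.sum_subset (Finset.range_subset_range.mpr (by omega))
          intro x hx hnx
          simp only [Finset.mem_range] at hx hnx
          exact Gt_neg (by omega)
  have h3 : ∀ j ∈ Finset.range (N+1),
      (∑ ℓ ∈ Finset.range (N+1), Gt q N m ℓ j)
      = (-1 : ℝ) ^ (N - j) * q ^ ((N - j) * (N - j - 1) / 2) * gbinom q N j *
          (∏ r ∈ Finset.Icc (j + 1) N, (q ^ r + 1)) * q ^ (2 * j * m) := by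
    intro j hj'
    have hj : j ≤ N := Nat.lt_succ_iff.mp (Finset.mem_range.mp hj')
    have hsub : ∑ ℓ ∈ Finset.range (N+1), Gt q N m ℓ j
        = ∑ ℓ ∈ Finset.range (N-j+1), Gt q N m ℓ j := by
      symm
      apply Finset.sum_subset (Finset.range_subset_range.mpr (by omega))
      intro x hx hnx
      simp only [Finset.mem_range] at hx hnx
      exact Gt_neg (by omega)
    rw [hsub, ← per_j hq hj hNm]
    apply Finset.sum_congr rfl
    intro ℓ hℓ
    simp only [Finset.mem_range] at hℓ
    exact Gt_pos (by omega)
  rw [Finset.sum_congr rfl h1, Finset.sum_comm, Finset.sum_congr rfl h3]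
end
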